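/- arXiv:2008.02410 — 7 statements merged into one kernel-verified Lean document; each statement's English description precedes it below -/
import Mathlib

section
/- Define μ : ℕ → ℕ recursively by μ(1) = 1 and μ(n) = min over 1 ≤ p ≤ n-1 of n·μ(p)·μ(n-p) for n ≥ 2. Then for all n ≥ 1, μ(n) ≥ 2^(2n-2)/n. -/
/-- `μ(1) = 1` and `μ(n) = min_{1 ≤ p ≤ n-1} n·μ(p)·μ(n-p)` for `n ≥ 2`. -/
def mu : ℕ → ℕ
  | 0 => 1
  | 1 => 1
  | n + 2 =>
    (Finset.Icc 1 (n + 1)).attach.inf'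
      (Finset.attach_nonempty_iff.mpr (Finset.nonempty_Icc.mpr (by omega)))
      (fun p => (n + 2) * mu p.1 * mu (n + 2 - p.1))
decreasing_by
  · have := p.2; simp only [Finset.mem_Icc] at this; omega
  · have := p.2; simp only [Finset.mem_Icc] at this; omega

/-- For all `n ≥ 1`, `μ(n) ≥ 2^(2n-2)/n`. -/
theorem stmt_3 (n : ℕ) (hn : 1 ≤ n) : (2 : ℚ) ^ (2 * n - 2) / n ≤ (mu n : ℚ) := by
  induction n using Nat.strong_induction_on with
  | _ n ih =>
    match n, hn with
    | 1, _ => norm_num [mu]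
    | (m+2), _ =>
      rw [mu]
      obtain ⟨p, -, hp⟩ := Finset.exists_mem_eq_inf'
        (Finset.attach_nonempty_iff.mpr (Finset.nonempty_Icc.mpr (by omega : (1:ℕ) ≤ m+1)))
        (fun p : {x // x ∈ Finset.Icc 1 (m+1)} => (m + 2) * mu p.1 * mu (m + 2 - p.1))
      rw [hp]
      obtain ⟨hk1, hk2⟩ := Finset.mem_Icc.mp p.2
      set k := p.1 with hkdef
      set q := m + 2 - k with hqdef
      have hq1 : 1 ≤ q := by omega
      have hq2 : q ≤ m + 1 := by omega
      have ha := ih k (by omega) hk1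
      have hb := ih q (by omega) hq1
      have hk0 : (0:ℚ) < (k:ℚ) := by exact_mod_cast hk1
      have hq0 : (0:ℚ) < (q:ℚ) := by exact_mod_cast hq1
      rw [div_le_iff₀ hk0] at ha
      rw [div_le_iff₀ hq0] at hb
      have hAB : (2:ℚ)^(2*m) ≤ ((mu k : ℚ) * k) * ((mu q : ℚ) * q) := by
        calc (2:ℚ)^(2*m) = 2^(2*k-2) * 2^(2*q-2) := by
              rw [← pow_add]; congr 1; omega
          _ ≤ ((mu k : ℚ) * k) * ((mu q : ℚ) * q) := by
              apply mul_le_mul ha hb (by positivity)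
              positivity
      have hqcast : (q:ℚ) = (m:ℚ) + 2 - k := by
        have : (q:ℕ) + k = m + 2 := by omega
        have := congrArg (fun x : ℕ => (x:ℚ)) this
        push_cast at this; linarith
      have h4kq : 4 * (k:ℚ) * q ≤ ((m:ℚ)+2)^2 := by
        nlinarith [sq_nonneg ((m:ℚ) + 2 - 2*k)]
      have hexp : 2*(m+2)-2 = 2*m+2 := by omega
      rw [hexp, div_le_iff₀ (by positivity : (0:ℚ) < ((m+2:ℕ):ℚ))]
      have h2 : (2:ℚ)^(2*m+2) = 2^(2*m) * 4 := by ring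
      push_cast
      have hap : (0:ℚ) ≤ (mu k : ℚ) := by positivity
      have hbp : (0:ℚ) ≤ (mu q : ℚ) := by positivity
      nlinarith [mul_nonneg hap hbp, hAB, h4kq, mul_le_mul_of_nonneg_right h4kq (mul_nonneg hap hbp)]
end

section
/- Define μ : ℕ → ℕ by μ(1) = 1 and μ(n) = min_{1 ≤ p ≤ n-1} n·μ(p)·μ(n-p). Then for every integer i ≥ 0, μ(2^i) = 2^(2·2^i - 2)/2^i, i.e., μ(2^i) = τ(2^i). -/
theorem mu_add_two (n : ℕ) :
    mu (n + 2) = (Finset.Icc 1 (n + 1)).attach.inf'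
      (Finset.attach_nonempty_iff.mpr (Finset.nonempty_Icc.mpr (by omega)))
      (fun p => (n + 2) * mu p.1 * mu (n + 2 - p.1)) := by
  rw [mu]

theorem mu_add_le {p q : ℕ} (hp : 1 ≤ p) (hq : 1 ≤ q) : mu (p + q) ≤ (p + q) * mu p * mu q := by
  obtain ⟨n, hn⟩ : ∃ n, p + q = n + 2 := ⟨p + q - 2, by omega⟩
  have hmem : p ∈ Finset.Icc 1 (n + 1) := Finset.mem_Icc.mpr ⟨hp, by omega⟩
  have hq_eq : q = n + 2 - p := by omega
  rw [hn, mu_add_two, hq_eq]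
  exact Finset.inf'_le _ (Finset.mem_attach _ ⟨p, hmem⟩)

theorem exists_mu_eq_mul {n : ℕ} (hn : 2 ≤ n) :
    ∃ p q, 1 ≤ p ∧ 1 ≤ q ∧ p + q = n ∧ mu n = n * mu p * mu q := by
  obtain ⟨m, rfl⟩ : ∃ m, n = m + 2 := ⟨n - 2, by omega⟩
  obtain ⟨⟨p, hp⟩, -, hmin⟩ := Finset.exists_mem_eq_inf' (Finset.attach_nonempty_iff.mpr
    (Finset.nonempty_Icc.mpr (by omega : 1 ≤ m + 1)))
    (fun p : Finset.Icc 1 (m + 1) => (m + 2) * mu p.1 * mu (m + 2 - p.1))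
  rw [Finset.mem_Icc] at hp
  exact ⟨p, m + 2 - p, hp.1, by omega, by omega, by rw [mu_add_two, hmin]⟩

theorem mu_two_mul_le (n : ℕ) (hn : 1 ≤ n) : mu (2 * n) ≤ 2 * n * mu n ^ 2 := by
  simpa only [two_mul, sq, mul_assoc] using mu_add_le hn hn

theorem four_pow_le_mul_mu {n : ℕ} (hn : 1 ≤ n) : 4 ^ (n - 1) ≤ n * mu n := by
  induction n using Nat.strong_induction_on with
  | _ n ih =>
    obtain rfl | hn2 : n = 1 ∨ 2 ≤ n := by omega
    · simp [mu]
    obtain ⟨p, q, hp, hq, rfl, hmu⟩ := exists_mu_eq_mul hn2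
    have hpq : 4 * (p * q) ≤ (p + q) * (p + q) := by nlinarith [sq_nonneg ((p : ℤ) - q)]
    calc 4 ^ (p + q - 1) = 4 * (4 ^ (p - 1) * 4 ^ (q - 1)) := by
          rw [← pow_add, ← pow_succ']; congr 1; omega
      _ ≤ 4 * ((p * mu p) * (q * mu q)) := by
          gcongr
          exacts [ih p (by omega) hp, ih q (by omega) hq]
      _ = 4 * (p * q) * (mu p * mu q) := by ring
      _ ≤ (p + q) * (p + q) * (mu p * mu q) := by gcongr
      _ = (p + q) * mu (p + q) := by rw [hmu]; ring

theorem two_pow_mul_mu_two_pow (i : ℕ) : 2 ^ i * mu (2 ^ i) = 4 ^ (2 ^ i - 1) := by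
  induction i with
  | zero => simp [mu]
  | succ i ih =>
    refine le_antisymm ?_ (four_pow_le_mul_mu Nat.one_le_two_pow)
    have hexp : 2 ^ (i + 1) - 1 = 2 * (2 ^ i - 1) + 1 := by
      have := Nat.one_le_two_pow (n := i); rw [pow_succ]; omega
    calc 2 ^ (i + 1) * mu (2 ^ (i + 1)) ≤ 2 ^ (i + 1) * (2 * 2 ^ i * mu (2 ^ i) ^ 2) := by
          rw [pow_succ']
          exact Nat.mul_le_mul_left _ (mu_two_mul_le _ Nat.one_le_two_pow)
      _ = 4 * (2 ^ i * mu (2 ^ i)) ^ 2 := by ring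
      _ = 4 ^ (2 ^ (i + 1) - 1) := by rw [ih, hexp]; ring

/-- For every integer `i ≥ 0`, `μ(2^i) = 2^(2·2^i - 2)/2^i = τ(2^i)`. -/
theorem stmt_4 (i : ℕ) : (mu (2 ^ i) : ℚ) = (2 : ℚ) ^ (2 * 2 ^ i - 2) / 2 ^ i := by
  have hexp : 2 * 2 ^ i - 2 = 2 * (2 ^ i - 1) := by omega
  rw [eq_div_iff (by positivity), hexp, pow_mul, mul_comm]
  exact_mod_cast two_pow_mul_mu_two_pow i
end

section
/- Define μ : ℕ → ℕ by μ(1) = 1 and μ(n) = min_{1 ≤ p ≤ n-1} n·μ(p)·μ(n-p). Then for every n ≥ 2, if s is the unique power of 2 satisfying n/3 ≤ s < 2n/3, then μ(n) = n·μ(s)·μ(n-s). -/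
lemma mu_le (n p : ℕ) (hn : 2 ≤ n) (hp1 : 1 ≤ p) (hp2 : p ≤ n - 1) :
    mu n ≤ n * mu p * mu (n - p) := by
  obtain ⟨m, rfl⟩ : ∃ m, n = m + 2 := ⟨n - 2, by omega⟩
  have hmem : p ∈ Finset.Icc 1 (m + 1) := Finset.mem_Icc.mpr ⟨hp1, by omega⟩
  conv_lhs => rw [mu]
  exact Finset.inf'_le _ (Finset.mem_attach _ ⟨p, hmem⟩)

lemma mu_exists_eq (n : ℕ) (hn : 2 ≤ n) :
    ∃ p, 1 ≤ p ∧ p ≤ n - 1 ∧ mu n = n * mu p * mu (n - p) := by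
  obtain ⟨m, rfl⟩ : ∃ m, n = m + 2 := ⟨n - 2, by omega⟩
  obtain ⟨b, _, hb⟩ := Finset.exists_mem_eq_inf'
    (s := (Finset.Icc 1 (m + 1)).attach)
    (Finset.attach_nonempty_iff.mpr (Finset.nonempty_Icc.mpr (by omega)))
    (fun p => (m + 2) * mu p.1 * mu (m + 2 - p.1))
  have hbm := b.2
  simp only [Finset.mem_Icc] at hbm
  refine ⟨b.1, hbm.1, by omega, ?_⟩
  conv_lhs => rw [mu]
  exact hb

lemma nested (a b c d : ℕ) (hsum : a + b = c + d) (h1 : c ≤ a) (h2 : a ≤ b) :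
    c * d ≤ a * b := by
  obtain ⟨x, rfl⟩ := Nat.exists_eq_add_of_le h1
  have hd : d = b + x := by omega
  subst hd
  have hcb : c ≤ b := by omega
  calc c * (b + x) = c * b + c * x := by ring
    _ ≤ c * b + b * x := by
        have := Nat.mul_le_mul_right x hcb
        omega
    _ = (c + x) * b := by ring

lemma pow2_split {s : ℕ} (h : ∃ k, s = 2 ^ k) (h2 : 2 ≤ s) :
    ∃ t, (∃ k, t = 2 ^ k) ∧ s = 2 * t := by
  obtain ⟨k, rfl⟩ := h
  cases k with
  | zero => norm_num at h2
  | succ k => exact ⟨2 ^ k, ⟨k, rfl⟩, by ring⟩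

lemma exists_window : ∀ m : ℕ, 2 ≤ m → ∃ t, (∃ j, t = 2 ^ j) ∧ 3 * t < 2 * m ∧ m ≤ 3 * t := by
  intro m
  induction m using Nat.strong_induction_on with
  | _ m IH =>
  intro hm
  by_cases h3 : m ≤ 3
  · exact ⟨1, ⟨0, by norm_num⟩, by omega, by omega⟩
  · obtain ⟨t, htpow, h1, h2⟩ := IH ((m + 1) / 2) (by omega) (by omega)
    by_cases he : 3 * t = m
    · exact ⟨t, htpow, by omega, by omega⟩
    · refine ⟨2 * t, ?_, by omega, by omega⟩
      obtain ⟨j, rfl⟩ := htpow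
      exact ⟨j + 1, by ring⟩

theorem key (n : ℕ) : ∀ s p : ℕ, (∃ k, s = 2 ^ k) → 3 * s < 2 * n → n ≤ 3 * s →
    1 ≤ p → p ≤ n - 1 → mu s * mu (n - s) ≤ mu p * mu (n - p) := by
  induction n using Nat.strong_induction_on with
  | _ n IH =>
  intro s p hpow hw1 hw2 hp1 hp2
  have hs1 : 1 ≤ s := by obtain ⟨k, rfl⟩ := hpow; exact Nat.one_le_pow _ _ (by norm_num)
  have hn2 : 2 ≤ n := by omega
  have muEq : ∀ m, m < n → ∀ t, (∃ j, t = 2 ^ j) → 3 * t < 2 * m → m ≤ 3 * t →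
      mu m = m * (mu t * mu (m - t)) := by
    intro m hm t htpow h1 h2
    have ht1 : 1 ≤ t := by obtain ⟨j, rfl⟩ := htpow; exact Nat.one_le_pow _ _ (by norm_num)
    have hm2 : 2 ≤ m := by omega
    have htm : t ≤ m - 1 := by omega
    refine le_antisymm ?_ ?_
    · have h := mu_le m t hm2 ht1 htm
      rwa [mul_assoc] at h
    · obtain ⟨p₀, h1', h2', h3'⟩ := mu_exists_eq m hm2
      rw [h3', mul_assoc]
      exact Nat.mul_le_mul le_rfl (IH m hm t p₀ htpow h1 h2 h1' h2')
  suffices H : ∀ a b, a + b = n → a ≤ b → 1 ≤ a → mu s * mu (n - s) ≤ mu a * mu b by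
    rcases le_total p (n - p) with h | h
    · exact H p (n - p) (by omega) h hp1
    · exact (H (n - p) p (by omega) h (by omega)).trans_eq (mul_comm _ _)
  clear hp1 hp2 p
  intro p q hpq hple hp1
  have hq1 : 1 ≤ q := le_trans hp1 hple
  have hpn : p < n := by omega
  have hqn : q < n := by omega
  have hsn : s < n := by omega
  by_cases hps : p = s
  · subst hps
    rw [show n - p = q from by omega]
  by_cases hqs : q = s
  · subst hqs
    rw [show n - q = p from by omega]
    exact le_of_eq (mul_comm _ _)
  by_cases hA : 3 * s < 2 * q
  · -- case A : q > 3s/2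
    have hsq : s + 1 ≤ q := by omega
    have hqeq := muEq q hqn s hpow (by omega) (by omega)
    by_cases hpsle : p ≤ s
    · -- A1
      have hns2 : 2 ≤ n - s := by omega
      obtain ⟨t, htpow, ht1, ht2⟩ := exists_window (n - s) hns2
      have hnseq := muEq (n - s) (by omega) t htpow ht1 ht2
      have hsplit := IH (n - s) (by omega) t p htpow ht1 ht2 hp1 (by omega)
      rw [show n - s - p = q - s from by omega] at hsplit
      calc mu s * mu (n - s)
          = mu s * ((n - s) * (mu t * mu (n - s - t))) := by rw [hnseq]
        _ ≤ mu s * (q * (mu p * mu (q - s))) :=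
            Nat.mul_le_mul le_rfl (Nat.mul_le_mul (by omega) hsplit)
        _ = mu p * (q * (mu s * mu (q - s))) := by ring
        _ = mu p * mu q := by rw [hqeq]
    · -- A2
      push_neg at hpsle
      have hs2 : 2 ≤ s := by omega
      obtain ⟨s', hs'pow, hss⟩ := pow2_split hpow hs2
      have hpeq := muEq p hpn s' hs'pow (by omega) (by omega)
      have hseq := muEq s hsn s' hs'pow (by omega) (by omega)
      rw [show s - s' = s' from by omega] at hseq
      have hnseq := muEq (n - s) (by omega) s hpow (by omega) (by omega)
      rw [show n - s - s = n - 2 * s from by omega] at hnseq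
      have hsplit := IH (n - 3 * s') (by omega) s' (p - s') hs'pow (by omega) (by omega)
        (by omega) (by omega)
      rw [show n - 3 * s' - s' = n - 2 * s from by omega,
          show n - 3 * s' - (p - s') = q - s from by omega] at hsplit
      have hprod : s * (n - s) ≤ p * q := nested p q s (n - s) (by omega) (by omega) hple
      calc mu s * mu (n - s)
          = ((s * (n - s)) * (mu s' * mu (n - 2 * s))) * (s * (mu s' * (mu s' * mu s'))) := by
            rw [hnseq, hseq]; ring
        _ ≤ ((p * q) * (mu (p - s') * mu (q - s))) * (s * (mu s' * (mu s' * mu s'))) :=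
            Nat.mul_le_mul (Nat.mul_le_mul hprod hsplit) le_rfl
        _ = mu p * mu q := by rw [hpeq, hqeq, hseq]; ring
  · -- q ≤ 3s/2
    have hA' : 2 * q ≤ 3 * s := by omega
    by_cases hC : q < s
    · -- case C
      have h4q : 3 * s < 4 * q := by omega
      have hs5 : 5 ≤ s := by omega
      obtain ⟨s', hs'pow, hss⟩ := pow2_split hpow (by omega)
      obtain ⟨s'', hs''pow, hss'⟩ := pow2_split hs'pow (by omega)
      have hqeq := muEq q hqn s' hs'pow (by omega) (by omega)
      have hnp : n - s < p := by omega
      have hseq := muEq s hsn s' hs'pow (by omega) (by omega)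
      rw [show s - s' = s' from by omega] at hseq
      have hprod : (n - s) * s ≤ p * q := nested p q (n - s) s (by omega) (by omega) hple
      by_cases hC1 : 3 * s < 4 * p
      · -- C1
        have hpeq := muEq p hpn s' hs'pow (by omega) (by omega)
        have hns2 : 2 ≤ n - s := by omega
        obtain ⟨t, htpow, ht1, ht2⟩ := exists_window (n - s) hns2
        have hnseq := muEq (n - s) (by omega) t htpow ht1 ht2
        have hsplit := IH (n - s) (by omega) t (p - s') htpow ht1 ht2 (by omega) (by omega)
        rw [show n - s - (p - s') = q - s' from by omega] at hsplit
        calc mu s * mu (n - s)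
            = (((n - s) * s) * (mu t * mu (n - s - t))) * (mu s' * mu s') := by
              rw [hnseq, hseq]; ring
          _ ≤ ((p * q) * (mu (p - s') * mu (q - s'))) * (mu s' * mu s') :=
              Nat.mul_le_mul (Nat.mul_le_mul hprod hsplit) le_rfl
          _ = mu p * mu q := by rw [hpeq, hqeq]; ring
      · -- C2
        push_neg at hC1
        have hpeq := muEq p hpn s'' hs''pow (by omega) (by omega)
        have hm := IH (n - 3 * s'') (by omega) s' (p - s'') hs'pow (by omega) (by omega)
          (by omega) (by omega)
        rw [show n - 3 * s'' - s' = n - 5 * s'' from by omega,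
            show n - 3 * s'' - (p - s'') = q - s' from by omega] at hm
        have hnseq := muEq (n - s) (by omega) s'' hs''pow (by omega) (by omega)
        rw [show n - s - s'' = n - 5 * s'' from by omega] at hnseq
        calc mu s * mu (n - s)
            = (((n - s) * s) * (mu s' * mu (n - 5 * s''))) * (mu s' * mu s'') := by
              rw [hnseq, hseq]; ring
          _ ≤ ((p * q) * (mu (p - s'') * mu (q - s'))) * (mu s' * mu s'') :=
              Nat.mul_le_mul (Nat.mul_le_mul hprod hm) le_rfl
          _ = mu p * mu q := by rw [hpeq, hqeq]; ring
    · -- case B : s ≤ q ≤ 3s/2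
      push_neg at hC
      have hs2 : 2 ≤ s := by omega
      obtain ⟨s', hs'pow, hss⟩ := pow2_split hpow hs2
      have hqeq := muEq q hqn s' hs'pow (by omega) (by omega)
      by_cases hn2s : n ≤ 2 * s
      · -- B-a
        have hsplit := IH (n - s') (by omega) s' p hs'pow (by omega) (by omega) hp1 (by omega)
        rw [show n - s' - s' = n - s from by omega,
            show n - s' - p = q - s' from by omega] at hsplit
        have hseq := muEq s hsn s' hs'pow (by omega) (by omega)
        rw [show s - s' = s' from by omega] at hseq
        calc mu s * mu (n - s)
            = (s * (mu s' * mu (n - s))) * mu s' := by rw [hseq]; ring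
          _ ≤ (q * (mu p * mu (q - s'))) * mu s' :=
              Nat.mul_le_mul (Nat.mul_le_mul (by omega) hsplit) le_rfl
          _ = mu p * mu q := by rw [hqeq]; ring
      · push_neg at hn2s
        by_cases hpsle : p ≤ s
        · -- B-b
          have hsplit := IH (n - s') (by omega) s p hpow (by omega) (by omega) hp1 (by omega)
          rw [show n - s' - s = n - 3 * s' from by omega,
              show n - s' - p = q - s' from by omega] at hsplit
          have hnseq := muEq (n - s) (by omega) s' hs'pow (by omega) (by omega)
          rw [show n - s - s' = n - 3 * s' from by omega] at hnseq
          calc mu s * mu (n - s)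
              = ((n - s) * (mu s * mu (n - 3 * s'))) * mu s' := by rw [hnseq]; ring
            _ ≤ (q * (mu p * mu (q - s'))) * mu s' :=
                Nat.mul_le_mul (Nat.mul_le_mul (by omega) hsplit) le_rfl
            _ = mu p * mu q := by rw [hqeq]; ring
        · -- B-c
          push_neg at hpsle
          have hpeq := muEq p hpn s' hs'pow (by omega) (by omega)
          have hns2 : 2 ≤ n - s := by omega
          obtain ⟨t, htpow, ht1, ht2⟩ := exists_window (n - s) hns2
          have hnseq := muEq (n - s) (by omega) t htpow ht1 ht2
          have hsplit := IH (n - s) (by omega) t (p - s') htpow ht1 ht2 (by omega) (by omega)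
          rw [show n - s - (p - s') = q - s' from by omega] at hsplit
          have hseq := muEq s hsn s' hs'pow (by omega) (by omega)
          rw [show s - s' = s' from by omega] at hseq
          have hprod : s * (n - s) ≤ p * q := nested p q s (n - s) (by omega) (by omega) hple
          calc mu s * mu (n - s)
              = ((s * (n - s)) * (mu t * mu (n - s - t))) * (mu s' * mu s') := by
                rw [hnseq, hseq]; ring
            _ ≤ ((p * q) * (mu (p - s') * mu (q - s'))) * (mu s' * mu s') :=
                Nat.mul_le_mul (Nat.mul_le_mul hprod hsplit) le_rfl
            _ = mu p * mu q := by rw [hpeq, hqeq]; ring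

/-- For every `n ≥ 2`, if `s` is a power of 2 satisfying `n/3 ≤ s < 2n/3`, then
`μ(n) = n·μ(s)·μ(n-s)`. -/
theorem stmt_5 (n : ℕ) (hn : 2 ≤ n) (s : ℕ) (hpow : ∃ k : ℕ, s = 2 ^ k)
    (h1 : (n : ℚ) / 3 ≤ (s : ℚ)) (h2 : (s : ℚ) < 2 * (n : ℚ) / 3) :
    mu n = n * mu s * mu (n - s) := by
  have hs1 : 1 ≤ s := by
    obtain ⟨k, rfl⟩ := hpow; exact Nat.one_le_pow _ _ (by norm_num)
  have hA : n ≤ 3 * s := by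
    have h : (n : ℚ) ≤ 3 * (s : ℚ) := by linarith
    exact_mod_cast h
  have hB : 3 * s < 2 * n := by
    have h : 3 * (s : ℚ) < 2 * (n : ℚ) := by linarith
    exact_mod_cast h
  refine le_antisymm (mu_le n s (by omega) hs1 (by omega)) ?_
  obtain ⟨p, hp1, hp2, hp3⟩ := mu_exists_eq n (by omega)
  rw [hp3, mul_assoc, mul_assoc]
  exact Nat.mul_le_mul le_rfl (key n s p hpow hB hA hp1 hp2)
end

section
/- Define β(n) = μ(n)/τ(n) where μ(1)=1, μ(n) = min_{1 ≤ p ≤ n-1} n·μ(p)·μ(n-p), and τ(n) = 2^(2n-2)/n. Then β(2n) = β(n) for all n ≥ 1. -/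
/-- `β(n) = μ(n)/τ(n) = μ(n)·n/2^(2n-2)`. -/
def beta (n : ℕ) : ℚ := (mu n : ℚ) * n / 2 ^ (2 * n - 2)

lemma mu_zero : mu 0 = 1 := by rw [mu]

lemma mu_one : mu 1 = 1 := by rw [mu]

-- A part may be `0`, thanks to the convention `mu 0 = 1`.
lemma mu_le_of_add_eq {a b n : ℕ} (hab : a + b = n) (hn : 1 ≤ n) :
    mu n ≤ n * (mu a * mu b) := by
  rcases Nat.eq_zero_or_pos a with rfl | ha
  · obtain rfl : b = n := by omega
    rw [mu_zero, one_mul]; exact Nat.le_mul_of_pos_left _ hn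
  rcases Nat.eq_zero_or_pos b with rfl | hb
  · obtain rfl : a = n := by omega
    rw [mu_zero, mul_one]; exact Nat.le_mul_of_pos_left _ hn
  obtain ⟨m, rfl⟩ : ∃ m, n = m + 2 := ⟨n - 2, by omega⟩
  rw [show b = m + 2 - a by omega, ← mul_assoc, mu]
  exact Finset.inf'_le _ (Finset.mem_attach _ ⟨a, Finset.mem_Icc.mpr ⟨ha, by omega⟩⟩)

lemma exists_split_mu_eq {n : ℕ} (hn : 2 ≤ n) :
    ∃ a b, 1 ≤ a ∧ 1 ≤ b ∧ a + b = n ∧ mu n = n * (mu a * mu b) := by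
  obtain ⟨m, rfl⟩ : ∃ m, n = m + 2 := ⟨n - 2, by omega⟩
  rw [mu]
  obtain ⟨⟨a, ha⟩, -, hmin⟩ := Finset.exists_mem_eq_inf' _
    (fun p : Finset.Icc 1 (m + 1) => (m + 2) * mu p.1 * mu (m + 2 - p.1))
  rw [Finset.mem_Icc] at ha
  exact ⟨a, m + 2 - a, ha.1, by omega, by omega, by rw [hmin, mul_assoc]⟩

lemma two_mul_mu_two_mul_le {n : ℕ} (hn : 1 ≤ n)
    (hdouble : ∀ m < n, 1 ≤ m → 2 * mu (2 * m) = 4 ^ m * mu m) :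
    2 * mu (2 * n) ≤ 4 ^ n * mu n := by
  obtain rfl | hn := hn.eq_or_lt
  · have := mu_le_of_add_eq (show 1 + 1 = 2 * 1 by rfl) (by norm_num)
    rw [mu_one] at this ⊢
    omega
  obtain ⟨a, b, ha, hb, rfl, hmu⟩ := exists_split_mu_eq hn
  have h := mu_le_of_add_eq (a := 2 * a) (b := 2 * b) (n := 2 * (a + b)) (by ring) (by omega)
  calc 2 * mu (2 * (a + b)) ≤ 2 * (2 * (a + b) * (mu (2 * a) * mu (2 * b))) := by gcongr
    _ = (a + b) * ((2 * mu (2 * a)) * (2 * mu (2 * b))) := by ring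
    _ = (a + b) * ((4 ^ a * mu a) * (4 ^ b * mu b)) := by
      rw [hdouble a (by omega) ha, hdouble b (by omega) hb]
    _ = 4 ^ (a + b) * mu (a + b) := by rw [hmu]; ring

lemma le_two_mul_mu_two_mul_of_even_split {s t : ℕ} (hs : 1 ≤ s)
    (hmu : mu (2 * (s + t)) = 2 * (s + t) * (mu (2 * s) * mu (2 * t)))
    (hdouble_s : 2 * mu (2 * s) = 4 ^ s * mu s) (hdouble_t : 2 * mu (2 * t) = 4 ^ t * mu t) :
    4 ^ (s + t) * mu (s + t) ≤ 2 * mu (2 * (s + t)) := by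
  have h := mu_le_of_add_eq (rfl : s + t = s + t) (by omega)
  calc 4 ^ (s + t) * mu (s + t) ≤ 4 ^ (s + t) * ((s + t) * (mu s * mu t)) := by gcongr
    _ = (s + t) * ((4 ^ s * mu s) * (4 ^ t * mu t)) := by ring
    _ = (s + t) * ((2 * mu (2 * s)) * (2 * mu (2 * t))) := by rw [hdouble_s, hdouble_t]
    _ = 2 * mu (2 * (s + t)) := by rw [hmu]; ring

lemma le_two_mul_mu_two_mul_of_odd_split {q r n : ℕ} (hn : q + r + 1 = n)
    (hmu : mu (2 * n) = 2 * n * (mu (2 * q + 1) * mu (2 * r + 1)))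
    (hodd_q : (4 ^ q) ^ 2 * (mu q * mu (q + 1)) ≤ mu (2 * q + 1) ^ 2)
    (hodd_r : (4 ^ r) ^ 2 * (mu r * mu (r + 1)) ≤ mu (2 * r + 1) ^ 2) :
    4 ^ n * mu n ≤ 2 * mu (2 * n) := by
  have h1 := mu_le_of_add_eq (show q + (r + 1) = n by omega) (by omega)
  have h2 := mu_le_of_add_eq (show (q + 1) + r = n by omega) (by omega)
  refine le_of_pow_le_pow_left₀ two_ne_zero (Nat.zero_le _) ?_
  calc (4 ^ n * mu n) ^ 2 = (4 ^ n) ^ 2 * (mu n * mu n) := by ring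
    _ ≤ (4 ^ n) ^ 2 * ((n * (mu q * mu (r + 1))) * (n * (mu (q + 1) * mu r))) := by gcongr
    _ = 16 * n ^ 2 * (((4 ^ q) ^ 2 * (mu q * mu (q + 1))) * ((4 ^ r) ^ 2 * (mu r * mu (r + 1)))) := by
      subst hn; ring
    _ ≤ 16 * n ^ 2 * (mu (2 * q + 1) ^ 2 * mu (2 * r + 1) ^ 2) := by gcongr
    _ = (2 * mu (2 * n)) ^ 2 := by rw [hmu]; ring

lemma le_two_mul_mu_two_mul {n : ℕ} (hn : 1 ≤ n)
    (hdouble : ∀ m < n, 1 ≤ m → 2 * mu (2 * m) = 4 ^ m * mu m)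
    (hodd : ∀ m < n, (4 ^ m) ^ 2 * (mu m * mu (m + 1)) ≤ mu (2 * m + 1) ^ 2) :
    4 ^ n * mu n ≤ 2 * mu (2 * n) := by
  obtain ⟨a, b, ha, hb, hab, hmu⟩ := exists_split_mu_eq (show 2 ≤ 2 * n by omega)
  obtain ⟨s, rfl | rfl⟩ := Nat.even_or_odd' a
  · obtain ⟨t, rfl⟩ : ∃ t, b = 2 * t := ⟨n - s, by omega⟩
    obtain rfl : n = s + t := by omega
    exact le_two_mul_mu_two_mul_of_even_split (by omega) hmu
      (hdouble s (by omega) (by omega)) (hdouble t (by omega) (by omega))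
  · obtain ⟨r, rfl⟩ : ∃ r, b = 2 * r + 1 := ⟨n - s - 1, by omega⟩
    exact le_two_mul_mu_two_mul_of_odd_split (by omega) hmu (hodd s (by omega)) (hodd r (by omega))

lemma four_pow_sq_mul_le_sq_mu_of_split {s t n : ℕ} (hst : s + t = n) (hs : 1 ≤ s)
    (hmu : mu (2 * n + 1) = (2 * n + 1) * (mu (2 * s) * mu (2 * t + 1)))
    (hdouble_s : 2 * mu (2 * s) = 4 ^ s * mu s)
    (hodd_t : (4 ^ t) ^ 2 * (mu t * mu (t + 1)) ≤ mu (2 * t + 1) ^ 2) :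
    (4 ^ n) ^ 2 * (mu n * mu (n + 1)) ≤ mu (2 * n + 1) ^ 2 := by
  have h1 := mu_le_of_add_eq hst (by omega)
  have h2 := mu_le_of_add_eq (show s + (t + 1) = n + 1 by omega) (by omega)
  have hsq : (4 ^ s * mu s) ^ 2 = 4 * mu (2 * s) ^ 2 := by rw [← hdouble_s]; ring
  have hn : 4 * n * (n + 1) ≤ (2 * n + 1) ^ 2 := by nlinarith
  calc (4 ^ n) ^ 2 * (mu n * mu (n + 1))
      ≤ (4 ^ n) ^ 2 * ((n * (mu s * mu t)) * ((n + 1) * (mu s * mu (t + 1)))) := by gcongr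
    _ = n * (n + 1) * (4 ^ s * mu s) ^ 2 * ((4 ^ t) ^ 2 * (mu t * mu (t + 1))) := by subst hst; ring
    _ ≤ n * (n + 1) * (4 * mu (2 * s) ^ 2) * mu (2 * t + 1) ^ 2 := by rw [hsq]; gcongr
    _ = 4 * n * (n + 1) * (mu (2 * s) * mu (2 * t + 1)) ^ 2 := by ring
    _ ≤ (2 * n + 1) ^ 2 * (mu (2 * s) * mu (2 * t + 1)) ^ 2 := by gcongr
    _ = mu (2 * n + 1) ^ 2 := by rw [hmu]; ring

lemma four_pow_sq_mul_le_sq_mu {n : ℕ}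
    (hdouble : ∀ m ≤ n, 1 ≤ m → 2 * mu (2 * m) = 4 ^ m * mu m)
    (hodd : ∀ m < n, (4 ^ m) ^ 2 * (mu m * mu (m + 1)) ≤ mu (2 * m + 1) ^ 2) :
    (4 ^ n) ^ 2 * (mu n * mu (n + 1)) ≤ mu (2 * n + 1) ^ 2 := by
  rcases Nat.eq_zero_or_pos n with rfl | hn
  · simp [mu_zero, mu_one]
  obtain ⟨a, b, ha, hb, hab, hmu⟩ := exists_split_mu_eq (show 2 ≤ 2 * n + 1 by omega)
  obtain ⟨s, rfl | rfl⟩ := Nat.even_or_odd' a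
  · obtain ⟨t, rfl⟩ : ∃ t, b = 2 * t + 1 := ⟨n - s, by omega⟩
    exact four_pow_sq_mul_le_sq_mu_of_split (by omega) (by omega) hmu
      (hdouble s (by omega) (by omega)) (hodd t (by omega))
  · obtain ⟨t, rfl⟩ : ∃ t, b = 2 * t := ⟨n - s, by omega⟩
    exact four_pow_sq_mul_le_sq_mu_of_split (by omega) (by omega) (by rw [hmu, mul_comm (mu _)])
      (hdouble t (by omega) (by omega)) (hodd s (by omega))

theorem two_mul_mu_two_mul_and_four_pow_sq_mul_le_sq_mu (n : ℕ) :
    (1 ≤ n → 2 * mu (2 * n) = 4 ^ n * mu n) ∧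
      (4 ^ n) ^ 2 * (mu n * mu (n + 1)) ≤ mu (2 * n + 1) ^ 2 := by
  induction n using Nat.strong_induction_on with
  | _ n ih =>
  have hdouble : 1 ≤ n → 2 * mu (2 * n) = 4 ^ n * mu n := fun hn =>
    le_antisymm (two_mul_mu_two_mul_le hn fun m hm => (ih m hm).1)
      (le_two_mul_mu_two_mul hn (fun m hm => (ih m hm).1) fun m hm => (ih m hm).2)
  refine ⟨hdouble, four_pow_sq_mul_le_sq_mu (fun m hm => ?_) fun m hm => (ih m hm).2⟩
  rcases hm.lt_or_eq with hm | rfl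
  exacts [(ih m hm).1, hdouble]

theorem two_mul_mu_two_mul {n : ℕ} (hn : 1 ≤ n) : 2 * mu (2 * n) = 4 ^ n * mu n :=
  (two_mul_mu_two_mul_and_four_pow_sq_mul_le_sq_mu n).1 hn

/-- `β(2n) = β(n)` for all `n ≥ 1`. -/
theorem stmt_7 (n : ℕ) (hn : 1 ≤ n) : beta (2 * n) = beta n := by
  have hmu : (2 : ℚ) * mu (2 * n) = 4 ^ n * mu n := by exact_mod_cast two_mul_mu_two_mul hn
  have hpow : (2 : ℚ) ^ (2 * (2 * n) - 2) = 4 ^ n * 2 ^ (2 * n - 2) := by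
    rw [show 2 * (2 * n) - 2 = 2 * n + (2 * n - 2) by omega, pow_add, pow_mul]
    norm_num
  unfold beta
  rw [hpow, div_eq_div_iff (by positivity) (by positivity)]
  push_cast
  linear_combination (n * 2 ^ (2 * n - 2) : ℚ) * hmu
end

section
/- Let ν(n,m) be defined for positive integers, symmetric in its arguments, by ν(1,0) = ν(0,1) = 1 and ν(n,m) = max over splits (n₁,m₁)+(n₂,m₂) = (n,m) (with each part a valid nonempty bipartite label, i.e., not both coordinates zero, and (n_i, 0) only allowed when n_i ≤ 1, similarly (0, m_i) only when m_i ≤ 1) of (n₁m₂ + n₂m₁)·ν(n₁,m₁)·ν(n₂,m₂). Then for n ≥ m ≥ 1, ν(n,m) = m^(n-m+1)·((m-1)!)². -/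
/-- `ν(a,b)`: the recurrence for the maximum number of rainbow spanning trees in a
JL-coloring of the complete bipartite graph `K_{a,b}`, computed over JL_b-trees.
`ν = 1` on the leaf labels `(1,0)` and `(0,1)` (and degenerately when `a + b ≤ 1`),
and otherwise `ν(a,b)` is the maximum over splits `(a,b) = (a₁,b₁) + (a₂,b₂)` into
valid labels (a label `(x,y)` is valid if `x = 0 → y = 1` and `y = 0 → x = 1`) of
`(a₁b₂ + a₂b₁)·ν(a₁,b₁)·ν(a₂,b₂)`. -/
def nu (a b : ℕ) : ℕ :=
  if h : a + b ≤ 1 then 1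
  else
    ((Finset.Icc 0 a ×ˢ Finset.Icc 0 b).filter
      (fun q : ℕ × ℕ =>
        (q.1 = 0 → q.2 = 1) ∧ (q.2 = 0 → q.1 = 1) ∧
        (a - q.1 = 0 → b - q.2 = 1) ∧ (b - q.2 = 0 → a - q.1 = 1))).attach.sup
      (fun q =>
        (q.1.1 * (b - q.1.2) + (a - q.1.1) * q.1.2) *
          nu q.1.1 q.1.2 * nu (a - q.1.1) (b - q.1.2))
termination_by a + b
decreasing_by
  · have := q.2
    simp only [Finset.mem_filter, Finset.mem_product, Finset.mem_Icc] at this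
    omega
  · have := q.2
    simp only [Finset.mem_filter, Finset.mem_product, Finset.mem_Icc] at this
    omega



def F (m M : ℕ) : ℕ := m ^ (M - m + 1) * (Nat.factorial (m - 1)) ^ 2

def N (a b : ℕ) : ℕ := if a = 0 ∨ b = 0 then 1 else F (min a b) (max a b)

lemma fact_mul_le (m₁ m₂ : ℕ) (h1 : 1 ≤ m₁) (h2 : 1 ≤ m₂) :
    Nat.factorial m₁ * Nat.factorial m₂ ≤ Nat.factorial (m₁ + m₂ - 1) := by
  induction m₂ with
  | zero => omega
  | succ k ih =>
    rcases Nat.eq_zero_or_pos k with h | hk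
    · subst h
      simp [Nat.factorial]
    · 
      have := ih hk
      calc Nat.factorial m₁ * Nat.factorial (k+1)
          = Nat.factorial m₁ * Nat.factorial k * (k+1) := by
            rw [Nat.factorial_succ]; ring
        _ ≤ Nat.factorial (m₁ + k - 1) * (k+1) := by
            exact Nat.mul_le_mul_right _ this
        _ ≤ Nat.factorial (m₁ + k - 1) * (m₁ + k) := by
            apply Nat.mul_le_mul_left; omega
        _ = Nat.factorial (m₁ + k - 1 + 1) := by
            rw [Nat.factorial_succ]
            have : m₁ + k - 1 + 1 = m₁ + k := by omega
            rw [this]; ring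
        _ = Nat.factorial (m₁ + (k+1) - 1) := by congr 1; omega

lemma aux_pow (a k : ℕ) (ha : 2 ≤ a) : (a + k) * (a - 1) ^ k ≤ a ^ (k + 1) := by
  induction k with
  | zero => simp
  | succ k ih =>
    have h1 : (a + (k+1)) * (a-1)^(k+1) = ((a+k+1)*(a-1)) * (a-1)^k := by ring_nf
    have h2 : (a+k+1)*(a-1) ≤ a * (a+k) := by
      have : 1 ≤ a - 1 := by omega
      nlinarith [Nat.sub_add_cancel (by omega : 1 ≤ a)]
    calc (a + (k+1)) * (a-1)^(k+1) = ((a+k+1)*(a-1)) * (a-1)^k := h1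
      _ ≤ (a * (a+k)) * (a-1)^k := Nat.mul_le_mul_right _ h2
      _ = a * ((a+k) * (a-1)^k) := by ring
      _ ≤ a * a^(k+1) := Nat.mul_le_mul_left _ ih
      _ = a ^ (k+2) := by ring
lemma F_succ (m M : ℕ) (h : m ≤ M) : F m (M + 1) = m * F m M := by
  unfold F
  have : M + 1 - m + 1 = (M - m + 1) + 1 := by omega
  rw [this, pow_succ]; ring

lemma F_self (m : ℕ) : F m m = m * (Nat.factorial (m-1))^2 := by
  unfold F; simp

-- single diagonal step
lemma diag_step (m M : ℕ) (h : 1 ≤ m) (h2 : m + 2 ≤ M) : F m M ≤ F (m + 1) (M - 1) := by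
  unfold F
  have e1 : M - m + 1 = (M - m - 1) + 2 := by omega
  have e2 : M - 1 - (m + 1) + 1 = M - m - 1 := by omega
  have e3 : m + 1 - 1 = m := by omega
  rw [e1, e2, e3]
  have e4 : Nat.factorial m = m * Nat.factorial (m-1) := by
    conv_lhs => rw [show m = (m-1)+1 by omega]
    rw [Nat.factorial_succ]; congr 1; omega
  calc m ^ (M - m - 1 + 2) * (Nat.factorial (m-1))^2
      = m ^ (M-m-1) * (m * Nat.factorial (m-1))^2 := by ring
    _ ≤ (m+1) ^ (M-m-1) * (m * Nat.factorial (m-1))^2 := by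
        apply Nat.mul_le_mul_right
        exact Nat.pow_le_pow_left (by omega) _
    _ = (m+1) ^ (M-m-1) * (Nat.factorial m)^2 := by rw [e4]

lemma diag (m M m' M' : ℕ) (h1 : 1 ≤ m) (h2 : m ≤ m') (h3 : m' ≤ M') (h4 : m + M = m' + M') :
    F m M ≤ F m' M' := by
  obtain ⟨d, rfl⟩ : ∃ d, m' = m + d := ⟨m' - m, by omega⟩
  clear h2
  induction d generalizing m M with
  | zero => simp at *; have : M = M' := by omega
            rw [this]
  | succ k ih =>
    have hM : m + 2 ≤ M := by omega
    calc F m M ≤ F (m+1) (M-1) := diag_step m M h1 hM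
      _ ≤ F (m + (k+1)) M' := by
          have := ih (m+1) (M-1) (by omega) (by omega) (by omega)
          convert this using 2 <;> omega
lemma core_base (m₁ m₂ : ℕ) (h1 : 1 ≤ m₁) (h2 : 1 ≤ m₂) :
    (m₁ * m₂ + m₁ * m₂) * F m₁ m₁ * F m₂ m₂ ≤ F (m₁ + m₂) (m₁ + m₂) := by
  unfold F
  simp only [Nat.sub_self, pow_one, zero_add]
  have e1 : ∀ x : ℕ, 1 ≤ x → x * Nat.factorial (x-1) = Nat.factorial x := by
    intro x hx
    conv_rhs => rw [show x = (x-1)+1 by omega]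
    rw [Nat.factorial_succ]; congr 1; omega
  have key : Nat.factorial m₁ * Nat.factorial m₂ ≤ Nat.factorial (m₁ + m₂ - 1) :=
    fact_mul_le m₁ m₂ h1 h2
  calc (m₁ * m₂ + m₁ * m₂) * (m₁ * Nat.factorial (m₁-1) ^ 2) * (m₂ * Nat.factorial (m₂-1) ^ 2)
      = 2 * ((m₁ * Nat.factorial (m₁-1)) * (m₂ * Nat.factorial (m₂-1)))^2 := by ring
    _ = 2 * (Nat.factorial m₁ * Nat.factorial m₂)^2 := by rw [e1 m₁ h1, e1 m₂ h2]
    _ ≤ 2 * (Nat.factorial (m₁+m₂-1))^2 := by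
        apply Nat.mul_le_mul_left
        exact Nat.pow_le_pow_left key 2
    _ ≤ (m₁+m₂) * (Nat.factorial (m₁+m₂-1))^2 := by
        apply Nat.mul_le_mul_right
        omega
  
lemma core_step (m₁ m₂ M₁ M₂ : ℕ) (h1 : 1 ≤ m₁) (h2 : 1 ≤ m₂) (hM1 : m₁ ≤ M₁) (hM2 : m₂ ≤ M₂)
    (prev : (m₁ * m₂ + M₁ * M₂) * F m₁ M₁ * F m₂ M₂ ≤ F (m₁ + m₂) (M₁ + M₂)) :
    (m₁ * m₂ + (M₁ + 1) * M₂) * F m₁ (M₁ + 1) * F m₂ M₂ ≤ F (m₁ + m₂) (M₁ + M₂ + 1) := by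
  rw [F_succ m₁ M₁ hM1, F_succ (m₁+m₂) (M₁+M₂) (by omega)]
  have haux : m₁ * M₂ ≤ m₂ * (M₁ * M₂) := by
    calc m₁ * M₂ ≤ M₁ * M₂ := Nat.mul_le_mul_right _ hM1
      _ ≤ m₂ * (M₁ * M₂) := Nat.le_mul_of_pos_left _ h2
  have h3 : (m₁ * m₂ + (M₁ + 1) * M₂) * m₁ ≤ (m₁ + m₂) * (m₁ * m₂ + M₁ * M₂) := by
    have expand1 : (m₁ * m₂ + (M₁ + 1) * M₂) * m₁
        = m₁*m₁*m₂ + m₁*(M₁*M₂) + m₁*M₂ := by ring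
    have expand2 : (m₁ + m₂) * (m₁ * m₂ + M₁ * M₂)
        = m₁*m₁*m₂ + m₁*(M₁*M₂) + (m₁*m₂*m₂ + m₂*(M₁*M₂)) := by ring
    rw [expand1, expand2]
    have : m₁ * M₂ ≤ m₁*m₂*m₂ + m₂*(M₁*M₂) := le_add_self.trans' haux |>.trans (le_refl _)
    omega
  calc (m₁ * m₂ + (M₁ + 1) * M₂) * (m₁ * F m₁ M₁) * F m₂ M₂
      = ((m₁ * m₂ + (M₁ + 1) * M₂) * m₁) * (F m₁ M₁ * F m₂ M₂) := by ring
    _ ≤ ((m₁ + m₂) * (m₁ * m₂ + M₁ * M₂)) * (F m₁ M₁ * F m₂ M₂) := Nat.mul_le_mul_right _ h3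
    _ = (m₁ + m₂) * ((m₁ * m₂ + M₁ * M₂) * F m₁ M₁ * F m₂ M₂) := by ring
    _ ≤ (m₁ + m₂) * F (m₁ + m₂) (M₁ + M₂) := Nat.mul_le_mul_left _ prev

lemma core (m₁ M₁ m₂ M₂ : ℕ) (h1 : 1 ≤ m₁) (hM1 : m₁ ≤ M₁) (h2 : 1 ≤ m₂) (hM2 : m₂ ≤ M₂) :
    (m₁ * m₂ + M₁ * M₂) * F m₁ M₁ * F m₂ M₂ ≤ F (m₁ + m₂) (M₁ + M₂) := by
  obtain ⟨d₁, rfl⟩ : ∃ d, M₁ = m₁ + d := ⟨M₁ - m₁, by omega⟩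
  obtain ⟨d₂, rfl⟩ : ∃ d, M₂ = m₂ + d := ⟨M₂ - m₂, by omega⟩
  clear hM1 hM2
  induction d₁ with
  | zero =>
    induction d₂ with
    | zero =>
      simpa using core_base m₁ m₂ h1 h2
    | succ k ih =>
      have step := core_step m₂ m₁ (m₂ + k) m₁ h2 h1 (by omega) (by omega) ?_
      · calc (m₁ * m₂ + m₁ * (m₂ + (k+1))) * F m₁ m₁ * F m₂ (m₂ + (k+1))
            = (m₂ * m₁ + (m₂ + k + 1) * m₁) * F m₂ (m₂ + k + 1) * F m₁ m₁ := by ring_nf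
          _ ≤ F (m₂ + m₁) (m₂ + k + 1 + m₁) := by
              convert step using 2 <;> ring
          _ = F (m₁ + m₂) (m₁ + (m₂ + (k+1))) := by congr 1 <;> ring
      · calc (m₂ * m₁ + (m₂ + k) * m₁) * F m₂ (m₂ + k) * F m₁ m₁
            = (m₁ * m₂ + m₁ * (m₂ + k)) * F m₁ m₁ * F m₂ (m₂ + k) := by ring
          _ ≤ F (m₁ + m₂) (m₁ + (m₂ + k)) := ih
          _ = F (m₂ + m₁) (m₂ + k + m₁) := by congr 1 <;> ring
  | succ k ih =>
    have step := core_step m₁ m₂ (m₁ + k) (m₂ + d₂) h1 h2 (by omega) (by omega) ih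
    calc (m₁ * m₂ + (m₁ + (k+1)) * (m₂ + d₂)) * F m₁ (m₁ + (k+1)) * F m₂ (m₂ + d₂)
        = (m₁ * m₂ + ((m₁ + k) + 1) * (m₂ + d₂)) * F m₁ ((m₁ + k) + 1) * F m₂ (m₂ + d₂) := by
          congr 2 <;> ring_nf
      _ ≤ F (m₁ + m₂) ((m₁ + k) + (m₂ + d₂) + 1) := step
      _ = F (m₁ + m₂) ((m₁ + (k+1)) + (m₂ + d₂)) := by congr 1; ring
lemma N_symm (a b : ℕ) : N a b = N b a := by
  unfold N
  rw [min_comm, max_comm]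
  by_cases h : a = 0 ∨ b = 0
  · rw [if_pos h, if_pos h.symm]
  · rw [if_neg h, if_neg (fun hh => h hh.symm)]

lemma N_pos_eq (a b : ℕ) (ha : 1 ≤ a) (hb : 1 ≤ b) : N a b = F (min a b) (max a b) := by
  unfold N; rw [if_neg]; omega

-- b * N (a-1) b ≤ N a b, with equality when b ≤ a
lemma peelEq (a b : ℕ) (hb : 1 ≤ b) (hba : b ≤ a) : b * N (a - 1) b = N a b := by
  rcases Nat.eq_or_lt_of_le hba with h | h
  · -- b = a
    rcases Nat.eq_or_lt_of_le hb with h1 | h1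
    · -- b = 1, a = 1
      subst h; rw [← h1]; simp [N, F, Nat.factorial]
    · -- a = b ≥ 2
      subst h
      have h2 : 2 ≤ b := h1
      rw [N_pos_eq (b-1) b (by omega) hb, N_pos_eq b b hb hb]
      rw [min_eq_left (by omega), max_eq_right (by omega), min_self, max_self]
      unfold F
      have e1 : b - (b-1) + 1 = 2 := by omega
      have e2 : b - b + 1 = 1 := by omega
      rw [e1, e2]
      have e3 : b - 1 - 1 = b - 2 := by omega
      rw [e3]
      have e4 : Nat.factorial (b-1) = (b-1) * Nat.factorial (b-2) := by
        conv_lhs => rw [show b - 1 = (b-2)+1 by omega]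
        rw [Nat.factorial_succ]; congr 1; omega
      rw [e4]; ring
  · -- b < a, so b ≤ a - 1
    have ha1 : 1 ≤ a - 1 := by omega
    rw [N_pos_eq (a-1) b ha1 hb, N_pos_eq a b (by omega) hb]
    rw [min_eq_right (by omega : b ≤ a - 1), max_eq_left (by omega : b ≤ a - 1),
      min_eq_right (by omega : b ≤ a), max_eq_left (by omega : b ≤ a)]
    unfold F
    have e1 : a - b + 1 = (a - 1 - b + 1) + 1 := by omega
    rw [e1, pow_succ]; ring

lemma peelLe (a b : ℕ) (ha : 1 ≤ a) (hb : 1 ≤ b) (h1 : a = 1 → b = 1) :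
    b * N (a - 1) b ≤ N a b := by
  rcases le_or_gt b a with h | h
  · exact (peelEq a b hb h).le
  · -- a < b
    rcases Nat.eq_or_lt_of_le ha with h2 | h2
    · -- a = 1, then b = 1, contra with a < b
      omega
    · -- 2 ≤ a < b
      have ha2 : 2 ≤ a := h2
      rw [N_pos_eq (a-1) b (by omega) hb, N_pos_eq a b ha hb]
      rw [min_eq_left (by omega : a - 1 ≤ b), max_eq_right (by omega : a - 1 ≤ b),
        min_eq_left h.le, max_eq_right h.le]
      unfold F
      have e1 : b - (a-1) + 1 = (b - a) + 2 := by omega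
      have e2 : b - a + 1 = (b - a) + 1 := by omega
      rw [e1, e2]
      have e3 : a - 1 - 1 = a - 2 := by omega
      rw [e3]
      have e4 : Nat.factorial (a-1) = (a-1) * Nat.factorial (a-2) := by
        conv_lhs => rw [show a - 1 = (a-2)+1 by omega]
        rw [Nat.factorial_succ]; congr 1; omega
      rw [e4]
      have hpow := aux_pow a (b - a) ha2
      have hb' : b = a + (b - a) := by omega
      calc b * ((a-1) ^ (b - a + 2) * Nat.factorial (a-2) ^ 2)
          = ((a + (b-a)) * (a-1)^(b-a)) * ((a-1) * Nat.factorial (a-2))^2 := by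
            rw [← hb']; ring
        _ ≤ a ^ (b - a + 1) * ((a-1) * Nat.factorial (a-2))^2 :=
            Nat.mul_le_mul_right _ hpow

-- rearrangement bound for the weight
lemma weight_le (x y u v : ℕ) :
    x * v + u * y ≤ min x y * min u v + max x y * max u v := by
  rcases le_total x y with h1 | h1 <;> rcases le_total u v with h2 | h2 <;>
    simp [min_eq_left, min_eq_right, max_eq_left, max_eq_right, h1, h2] <;> nlinarith [h1, h2]

lemma min_add_min_le (a₁ b₁ a₂ b₂ : ℕ) : min a₁ b₁ + min a₂ b₂ ≤ min (a₁ + a₂) (b₁ + b₂) := by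
  omega

lemma key_s11 (a₁ b₁ a₂ b₂ : ℕ) (v1a : a₁ = 0 → b₁ = 1) (v1b : b₁ = 0 → a₁ = 1)
    (v2a : a₂ = 0 → b₂ = 1) (v2b : b₂ = 0 → a₂ = 1)
    (ha : 1 ≤ a₁ + a₂) (hb : 1 ≤ b₁ + b₂) :
    (a₁ * b₂ + a₂ * b₁) * N a₁ b₁ * N a₂ b₂ ≤ N (a₁ + a₂) (b₁ + b₂) := by
  rcases Nat.eq_zero_or_pos a₁ with hz | ha1
  · -- a₁ = 0, b₁ = 1 : weight = a₂, term = a₂ * N a₂ b₂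
    subst hz
    have hb1 : b₁ = 1 := v1a rfl
    subst hb1
    rcases Nat.eq_zero_or_pos a₂ with hz2 | ha2
    · subst hz2; simp
    · simp only [Nat.zero_mul, Nat.zero_add, Nat.mul_one]
      have h1 : N 0 1 = 1 := by simp [N]
      rw [h1, mul_one]
      have hbb : 1 ≤ b₂ + 1 := by omega
      have hcond : 1 + b₂ = 1 → a₂ = 1 := fun h => v2b (by omega)
      have e := peelLe (1 + b₂) a₂ (by omega) ha2 hcond
      rw [show 1 + b₂ - 1 = b₂ by omega] at e
      calc a₂ * N a₂ b₂ = a₂ * N b₂ a₂ := by rw [N_symm]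
        _ ≤ N (1 + b₂) a₂ := e
        _ = N a₂ (1 + b₂) := N_symm _ _
  · rcases Nat.eq_zero_or_pos b₁ with hz | hb1
    · -- b₁ = 0, a₁ = 1 : weight = b₂
      subst hz
      have ha1' : a₁ = 1 := v1b rfl
      subst ha1'
      rcases Nat.eq_zero_or_pos b₂ with hz2 | hb2
      · omega
      · simp only [Nat.mul_zero, Nat.add_zero, Nat.zero_add, Nat.mul_one]
        have h1 : N 1 0 = 1 := by simp [N]
        rw [h1]
        have hcond : 1 + a₂ = 1 → b₂ = 1 := fun h => v2a (by omega)
        have e := peelLe (1 + a₂) b₂ (by omega) hb2 hcond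
        rw [show 1 + a₂ - 1 = a₂ by omega] at e
        calc (1 * b₂ + a₂ * 0) * 1 * N a₂ b₂ = b₂ * N a₂ b₂ := by ring
          _ ≤ N (1 + a₂) b₂ := e
    · rcases Nat.eq_zero_or_pos a₂ with hz | ha2
      · -- a₂ = 0, b₂ = 1
        subst hz
        have hb2 : b₂ = 1 := v2a rfl
        subst hb2
        simp only [Nat.mul_zero, Nat.add_zero, Nat.mul_one, Nat.zero_mul]
        have h1 : N 0 1 = 1 := by simp [N]
        rw [h1, mul_one]
        have hcond : b₁ + 1 = 1 → a₁ = 1 := fun h => v1b (by omega)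
        have e := peelLe (b₁ + 1) a₁ (by omega) ha1 hcond
        rw [show b₁ + 1 - 1 = b₁ by omega] at e
        calc a₁ * N a₁ b₁ = a₁ * N b₁ a₁ := by rw [N_symm]
          _ ≤ N (b₁+1) a₁ := e
          _ = N a₁ (b₁+1) := by rw [N_symm]
      · rcases Nat.eq_zero_or_pos b₂ with hz | hb2
        · -- b₂ = 0, a₂ = 1
          subst hz
          have ha2' : a₂ = 1 := v2b rfl
          subst ha2'
          simp only [Nat.mul_zero, Nat.zero_add, Nat.mul_one, Nat.one_mul, Nat.add_zero]
          have h1 : N 1 0 = 1 := by simp [N]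
          rw [h1, mul_one]
          have hcond : a₁ + 1 = 1 → b₁ = 1 := fun h => v1a (by omega)
          have e := peelLe (a₁ + 1) b₁ (by omega) hb1 hcond
          rw [show a₁ + 1 - 1 = a₁ by omega] at e
          exact e
        · -- main case
          set m₁ := min a₁ b₁ with hm1
          set M₁ := max a₁ b₁ with hM1
          set m₂ := min a₂ b₂ with hm2
          set M₂ := max a₂ b₂ with hM2
          rw [N_pos_eq a₁ b₁ ha1 hb1, N_pos_eq a₂ b₂ ha2 hb2,
            N_pos_eq (a₁+a₂) (b₁+b₂) (by omega) (by omega)]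
          have hw : a₁ * b₂ + a₂ * b₁ ≤ m₁ * m₂ + M₁ * M₂ := weight_le a₁ b₁ a₂ b₂
          have hcore := core m₁ M₁ m₂ M₂ (by omega) (by omega) (by omega) (by omega)
          have hdiag : F (m₁ + m₂) (M₁ + M₂) ≤ F (min (a₁+a₂) (b₁+b₂)) (max (a₁+a₂) (b₁+b₂)) := by
            apply diag
            · omega
            · omega
            · omega
            · have e1 : m₁ + M₁ = a₁ + b₁ := by omega
              have e2 : m₂ + M₂ = a₂ + b₂ := by omega
              have e3 : min (a₁+a₂) (b₁+b₂) + max (a₁+a₂) (b₁+b₂) = (a₁+a₂) + (b₁+b₂) := by omega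
              omega
          calc (a₁ * b₂ + a₂ * b₁) * F m₁ M₁ * F m₂ M₂
              ≤ (m₁ * m₂ + M₁ * M₂) * F m₁ M₁ * F m₂ M₂ := by
                exact Nat.mul_le_mul_right _ (Nat.mul_le_mul_right _ hw)
            _ ≤ F (m₁ + m₂) (M₁ + M₂) := hcore
            _ ≤ _ := hdiag
lemma nu_leaf1 : nu 1 0 = 1 := by rw [nu]; simp
lemma nu_leaf2 : nu 0 1 = 1 := by rw [nu]; simp

theorem main (a b : ℕ) (ha : a = 0 → b = 1) (hb : b = 0 → a = 1) (hab : 1 ≤ a + b) :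
    nu a b = N a b := by
  by_cases h : a + b ≤ 1
  · rw [nu, dif_pos h]
    have : (a = 1 ∧ b = 0) ∨ (a = 0 ∧ b = 1) := by
      rcases Nat.eq_zero_or_pos a with h1 | h1
      · exact Or.inr ⟨h1, ha h1⟩
      · have : b = 0 := by omega
        exact Or.inl ⟨by omega, this⟩
    rcases this with ⟨h1, h2⟩ | ⟨h1, h2⟩ <;> subst h1 <;> subst h2 <;> simp [N]
  · have ha1 : 1 ≤ a := by
      by_contra hc
      have : a = 0 := by omega
      have := ha this; omega
    have hb1 : 1 ≤ b := by
      by_contra hc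
      have : b = 0 := by omega
      have := hb this; omega
    rw [nu, dif_neg h]
    apply le_antisymm
    · apply Finset.sup_le
      intro q _
      have hq := q.2
      simp only [Finset.mem_filter, Finset.mem_product, Finset.mem_Icc] at hq
      obtain ⟨⟨⟨_, hq1⟩, _, hq2⟩, c1, c2, c3, c4⟩ := hq
      have hs1 : 1 ≤ q.1.1 + q.1.2 := by
        by_contra hc
        have h1 : q.1.1 = 0 := by omega
        have := c1 h1; omega
      have hs2 : 1 ≤ (a - q.1.1) + (b - q.1.2) := by
        by_contra hc
        have h1 : a - q.1.1 = 0 := by omega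
        have := c3 h1; omega
      have e1 : nu q.1.1 q.1.2 = N q.1.1 q.1.2 :=
        main q.1.1 q.1.2 c1 c2 hs1
      have e2 : nu (a - q.1.1) (b - q.1.2) = N (a - q.1.1) (b - q.1.2) :=
        main (a - q.1.1) (b - q.1.2) c3 c4 hs2
      rw [e1, e2]
      have hk := key_s11 q.1.1 q.1.2 (a - q.1.1) (b - q.1.2) c1 c2 c3 c4 (by omega) (by omega)
      rwa [show q.1.1 + (a - q.1.1) = a by omega, show q.1.2 + (b - q.1.2) = b by omega] at hk
    · rcases le_total b a with hba | hab2
      · -- peel (1,0): q = (a-1, b)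
        have mem : ((a-1, b) : ℕ × ℕ) ∈ ((Finset.Icc 0 a ×ˢ Finset.Icc 0 b).filter
            (fun q : ℕ × ℕ =>
              (q.1 = 0 → q.2 = 1) ∧ (q.2 = 0 → q.1 = 1) ∧
              (a - q.1 = 0 → b - q.2 = 1) ∧ (b - q.2 = 0 → a - q.1 = 1))) := by
          simp only [Finset.mem_filter, Finset.mem_product, Finset.mem_Icc]
          refine ⟨⟨⟨by omega, by omega⟩, by omega, by omega⟩, ?_, ?_, ?_, ?_⟩ <;> omega
        refine le_trans ?_ (Finset.le_sup (Finset.mem_attach _ ⟨(a-1, b), mem⟩))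
        simp only
        have e1 : nu (a-1) b = N (a-1) b := by
          apply main
          · intro h1; omega
          · intro h1; omega
          · omega
        have e2 : a - (a-1) = 1 := by omega
        have e3 : b - b = 0 := by omega
        rw [e1, e2, e3, nu_leaf1]
        have := peelEq a b hb1 hba
        apply le_of_eq
        calc N a b = b * N (a-1) b := this.symm
          _ = ((a-1) * 0 + 1 * b) * N (a-1) b * 1 := by ring
      · -- peel (0,1): q = (a, b-1)
        have mem : ((a, b-1) : ℕ × ℕ) ∈ ((Finset.Icc 0 a ×ˢ Finset.Icc 0 b).filter
            (fun q : ℕ × ℕ =>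
              (q.1 = 0 → q.2 = 1) ∧ (q.2 = 0 → q.1 = 1) ∧
              (a - q.1 = 0 → b - q.2 = 1) ∧ (b - q.2 = 0 → a - q.1 = 1))) := by
          simp only [Finset.mem_filter, Finset.mem_product, Finset.mem_Icc]
          refine ⟨⟨⟨by omega, by omega⟩, by omega, by omega⟩, ?_, ?_, ?_, ?_⟩ <;> omega
        refine le_trans ?_ (Finset.le_sup (Finset.mem_attach _ ⟨(a, b-1), mem⟩))
        simp only
        have e1 : nu a (b-1) = N a (b-1) := by
          apply main
          · intro h1; omega
          · intro h1; omega
          · omega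
        have e2 : b - (b-1) = 1 := by omega
        have e3 : a - a = 0 := by omega
        rw [e1, e2, e3, nu_leaf2]
        have := peelEq b a ha1 hab2
        apply le_of_eq
        calc N a b = N b a := N_symm a b
          _ = a * N (b-1) a := this.symm
          _ = a * N a (b-1) := by rw [N_symm]
          _ = (a * 1 + 0 * (b-1)) * N a (b-1) * 1 := by ring
termination_by a + b
decreasing_by
  · omega
  · omega
  · omega
  · omega

/-- For `n ≥ m ≥ 1`, `ν(n,m) = m^(n-m+1)·((m-1)!)²`. -/
theorem stmt_11 (n m : ℕ) (hm : 1 ≤ m) (hmn : m ≤ n) :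
    nu n m = m ^ (n - m + 1) * (Nat.factorial (m - 1)) ^ 2 := by
  rw [main n m (by omega) (by omega) (by omega)]
  unfold N F
  rw [if_neg (by omega), min_eq_right hmn, max_eq_left hmn]
end

section
/- Let G be a connected graph on n vertices and φ : E(G) → [n-1] a surjective edge coloring with no rainbow cycle (a JL-coloring), with color classes C₁, …, C_{n-1}. Then the number of rainbow spanning trees of (G, φ) equals the product ∏_{i=1}^{n-1} |C_i|. -/
/-- `T` is the edge set of a spanning tree of `G`: its edges lie in `G`, and the graph
formed by these edges is connected (hence spanning) and acyclic. -/
def IsSpanningTreeEdges {V : Type*} (G : SimpleGraph V) (T : Finset (Sym2 V)) : Prop :=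
  ↑T ⊆ G.edgeSet ∧ (SimpleGraph.fromEdgeSet (↑T : Set (Sym2 V))).Connected ∧
    (SimpleGraph.fromEdgeSet (↑T : Set (Sym2 V))).IsAcyclic

/-- An edge set is rainbow under a coloring `φ` if all its edges receive distinct colors. -/
def IsRainbow {V : Type*} {k : ℕ} (φ : Sym2 V → Fin k) (T : Finset (Sym2 V)) : Prop :=
  Set.InjOn φ ↑T

/-- `G` has a rainbow cycle under `φ`: a cycle whose edges receive pairwise distinct colors. -/
def HasRainbowCycle {V : Type*} {k : ℕ} (G : SimpleGraph V) (φ : Sym2 V → Fin k) : Prop :=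
  ∃ (v : V) (c : G.Walk v v), c.IsCycle ∧ Set.InjOn φ {e | e ∈ c.edges}

/-- `φ` is a JL-coloring of `G`: every one of the `k` colors appears on some edge of `G`
(surjectivity onto the colors) and there is no rainbow cycle. -/
def IsJLColoring {V : Type*} {k : ℕ} (G : SimpleGraph V) (φ : Sym2 V → Fin k) : Prop :=
  (∀ c : Fin k, ∃ e ∈ G.edgeSet, φ e = c) ∧ ¬ HasRainbowCycle G φ

/-- The number of rainbow spanning trees of `G` under the edge coloring `φ`. -/
noncomputable def numRST {V : Type*} {k : ℕ} (G : SimpleGraph V) (φ : Sym2 V → Fin k) : ℕ :=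
  Nat.card {T : Finset (Sym2 V) // IsSpanningTreeEdges G T ∧ IsRainbow φ T}

/-! Without rainbow cycles every rainbow edge set is a forest. With `|V| - 1` colours, an edge set
meeting every colour class exactly once is therefore a forest with `|V| - 1` edges, i.e. a spanning
tree; conversely a rainbow spanning tree has `|V| - 1` edges, so it meets every colour class exactly
once. Rainbow spanning trees are thus the transversals of the colour classes, of which there are
`∏ |Cᵢ|`. -/

open SimpleGraph Finset

theorem bijOn_range_univ_of_leftInverse {α β : Type*} {φ : α → β} {f : β → α}
    (hf : Function.LeftInverse φ f) : Set.BijOn φ (Set.range f) Set.univ :=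
  ⟨Set.mapsTo_univ _ _,
    Function.Injective.injOn_range fun b b' h => (hf b).symm.trans (h.trans (hf b')),
    fun b _ => ⟨f b, Set.mem_range_self b, hf b⟩⟩

section Transversal

variable {α β : Type*} {S : Finset α} {φ : α → β}

abbrev Transversal (S : Finset α) (φ : α → β) : Type _ :=
  {T : Finset α // T ⊆ S ∧ Set.BijOn φ ↑T Set.univ}

def Transversal.ofPi [DecidableEq α] [Fintype β] [DecidableEq β] (f : ∀ b, S.filter (φ · = b)) :
    Transversal S φ :=
  ⟨univ.image fun b => (f b).1, by
    have hf b := mem_filter.1 (f b).2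
    refine ⟨fun a ha => ?_, ?_⟩
    · obtain ⟨b, -, rfl⟩ := mem_image.1 ha
      exact (hf b).1
    · rw [coe_image, coe_univ, Set.image_univ]
      exact bijOn_range_univ_of_leftInverse fun b => (hf b).2⟩

theorem Transversal.exists_mem (T : Transversal S φ) (b : β) : ∃ a ∈ T.1, φ a = b :=
  T.2.2.surjOn (Set.mem_univ b)

noncomputable def Transversal.toPi [DecidableEq β] (T : Transversal S φ) (b : β) :
    S.filter (φ · = b) :=
  ⟨(T.exists_mem b).choose, mem_filter.2 ⟨T.2.1 (T.exists_mem b).choose_spec.1,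
    (T.exists_mem b).choose_spec.2⟩⟩

theorem Transversal.eq_toPi [DecidableEq β] (T : Transversal S φ) {a : α} (ha : a ∈ T.1) :
    (T.toPi (φ a)).1 = a :=
  T.2.2.injOn (T.exists_mem (φ a)).choose_spec.1 ha (T.exists_mem (φ a)).choose_spec.2

noncomputable def Transversal.equivPi [DecidableEq α] [Fintype β] [DecidableEq β] :
    Transversal S φ ≃ ∀ b, S.filter (φ · = b) where
  toFun := Transversal.toPi
  invFun := Transversal.ofPi
  left_inv T := by
    refine Subtype.ext (Finset.ext fun a => ⟨fun ha => ?_, fun ha => ?_⟩)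
    · obtain ⟨b, -, rfl⟩ := mem_image.1 ha
      exact (T.exists_mem b).choose_spec.1
    · exact mem_image.2 ⟨φ a, mem_univ _, T.eq_toPi ha⟩
  right_inv f := by
    funext b
    have hfb : (f b).1 ∈ (Transversal.ofPi f).1 := mem_image_of_mem _ (mem_univ b)
    have := (Transversal.ofPi f).eq_toPi hfb
    rw [(mem_filter.1 (f b).2).2] at this
    exact Subtype.ext this

theorem Transversal.nat_card [DecidableEq α] [Fintype β] [DecidableEq β] (S : Finset α)
    (φ : α → β) :
    Nat.card (Transversal S φ) = ∏ b, #(S.filter (φ · = b)) := by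
  rw [Nat.card_congr Transversal.equivPi, Nat.card_pi]
  simp only [Nat.card_eq_fintype_card, Fintype.card_coe]

end Transversal

namespace SimpleGraph

variable {V : Type*} {G H : SimpleGraph V}

theorem IsAcyclic.isTree_of_card_edgeSet [Finite V] [Nonempty V] (hH : H.IsAcyclic)
    (hcard : Nat.card H.edgeSet + 1 = Nat.card V) : H.IsTree := by
  obtain ⟨F, hHF, -, hF⟩ := connected_top.exists_isTree_le_of_le_of_isAcyclic le_top hH
  have hFcard := (isTree_iff_connected_and_card.1 hF).2
  have hedges : H.edgeSet = F.edgeSet := by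
    refine Set.eq_of_subset_of_ncard_le (edgeSet_mono hHF) ?_ (Set.toFinite _)
    rw [← Nat.card_coe_set_eq, ← Nat.card_coe_set_eq]
    omega
  rwa [edgeSet_inj.1 hedges]

theorem edgeSet_fromEdgeSet_of_subset {s : Set (Sym2 V)} (h : s ⊆ G.edgeSet) :
    (fromEdgeSet s).edgeSet = s := by
  rw [edgeSet_fromEdgeSet, sdiff_eq_left]
  exact Set.subset_compl_iff_disjoint_right.1 (h.trans G.edgeSet_subset_compl_diagSet)

theorem nat_card_edgeSet_fromEdgeSet {T : Finset (Sym2 V)} (h : ↑T ⊆ G.edgeSet) :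
    Nat.card (fromEdgeSet (T : Set (Sym2 V))).edgeSet = #T := by
  rw [edgeSet_fromEdgeSet_of_subset h, Nat.card_coe_set_eq, Set.ncard_coe_finset]

end SimpleGraph

section RainbowSpanningTree

variable {V : Type*} {G : SimpleGraph V}

theorem IsRainbow.isAcyclic_fromEdgeSet {k : ℕ} {φ : Sym2 V → Fin k}
    (hφ : ¬ HasRainbowCycle G φ) {T : Finset (Sym2 V)} (hTG : ↑T ⊆ G.edgeSet) (hT : IsRainbow φ T) :
    (fromEdgeSet (T : Set (Sym2 V))).IsAcyclic := by
  intro v c hc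
  have hcT : ∀ e ∈ c.edges, e ∈ (T : Set (Sym2 V)) := fun e he =>
    edgeSet_fromEdgeSet_of_subset hTG ▸ c.edges_subset_edgeSet he
  have hcG : ∀ e ∈ c.edges, e ∈ G.edgeSet := fun e he => hTG (hcT e he)
  refine hφ ⟨v, c.transfer G hcG, hc.transfer hcG, fun e he e' he' => hT ?_ ?_⟩
  · exact hcT e (by simpa using he)
  · exact hcT e' (by simpa using he')

theorem isSpanningTreeEdges_and_isRainbow_iff [Fintype V] [Nonempty V]
    {φ : Sym2 V → Fin (Fintype.card V - 1)} (hφ : ¬ HasRainbowCycle G φ) (T : Finset (Sym2 V)) :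
    IsSpanningTreeEdges G T ∧ IsRainbow φ T ↔ ↑T ⊆ G.edgeSet ∧ Set.BijOn φ ↑T Set.univ := by
  have hV : Fintype.card (Fin (Fintype.card V - 1)) + 1 = Fintype.card V := by
    rw [Fintype.card_fin, Nat.sub_add_cancel Fintype.card_pos]
  constructor
  · rintro ⟨⟨hTG, hconn, hac⟩, hT⟩
    have hcard := (isTree_iff_connected_and_card.1 ⟨hconn, hac⟩).2
    rw [nat_card_edgeSet_fromEdgeSet hTG, Nat.card_eq_fintype_card, ← hV, add_left_inj] at hcard
    refine ⟨hTG, Set.mapsTo_univ _ _, hT, ?_⟩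
    rw [← coe_univ]
    exact surjOn_of_injOn_of_card_le φ (fun _ _ => mem_coe.2 (mem_univ _)) hT hcard.ge
  · rintro ⟨hTG, hT⟩
    have hac := IsRainbow.isAcyclic_fromEdgeSet hφ hTG hT.injOn
    refine ⟨⟨hTG, (hac.isTree_of_card_edgeSet ?_).connected, hac⟩, hT.injOn⟩
    rw [← coe_univ] at hT
    rw [nat_card_edgeSet_fromEdgeSet hTG, Nat.card_eq_fintype_card, hT.finsetCard_eq, card_univ,
      hV]

end RainbowSpanningTree

/-- For a JL-coloring `φ` of a connected graph `G` on `n` vertices (a surjective,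
rainbow-cycle-free coloring with `n - 1` colors), the number of rainbow spanning trees
equals the product of the sizes of the color classes. -/
theorem stmt_13 {V : Type*} [Fintype V] [DecidableEq V] (G : SimpleGraph V)
    [DecidableRel G.Adj] (hG : G.Connected)
    (φ : Sym2 V → Fin (Fintype.card V - 1)) (hφ : IsJLColoring G φ) :
    numRST G φ =
      ∏ c : Fin (Fintype.card V - 1), (G.edgeFinset.filter (fun e => φ e = c)).card := by
  have := hG.nonempty
  calc numRST G φ = Nat.card (Transversal G.edgeFinset φ) :=
        Nat.card_congr <| Equiv.subtypeEquivRight fun T => by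
          rw [isSpanningTreeEdges_and_isRainbow_iff hφ.2, ← coe_subset, coe_edgeFinset]
    _ = _ := Transversal.nat_card _ _
end

section
/- Let G be a connected graph on n vertices with a JL-coloring. If |E(G)| ≥ 2(n-1), then at least one color class has size exactly 1; consequently the bound |R(G,φ)| ≤ ∏ aᵢ (where a₁,…,a_{n-1} are the near-equal integer parts of |E(G)|, each ≥ 2) is strict. -/
open SimpleGraph Finset

section SuccessorCycles

variable {α : Type*} {R : α → α → Prop} {S : Finset α} {σ : α → α}

def HasSuccIn (R : α → α → Prop) (S : Finset α) : Prop := ∀ x ∈ S, ∃ y ∈ S, R x y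

theorem HasSuccIn.image_eq_of_minimal [DecidableEq α]
    (hS : Minimal (fun S => S.Nonempty ∧ HasSuccIn R S) S)
    (hσ : ∀ x ∈ S, σ x ∈ S ∧ R x (σ x)) : S.image σ = S := by
  have hsub : S.image σ ⊆ S := fun y hy => by
    obtain ⟨x, hx, rfl⟩ := mem_image.1 hy
    exact (hσ x hx).1
  refine hS.eq_of_le ⟨hS.prop.1.image σ, fun y hy => ?_⟩ hsub
  exact ⟨σ y, mem_image_of_mem σ (hsub hy), (hσ y (hsub hy)).2⟩

theorem HasSuccIn.exists_iterate_eq_of_minimal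
    (hS : Minimal (fun S => S.Nonempty ∧ HasSuccIn R S) S)
    (hσ : ∀ x ∈ S, σ x ∈ S ∧ R x (σ x)) {b c : α} (hb : b ∈ S) (hc : c ∈ S) :
    ∃ n, σ^[n] c = b := by
  classical
  have hO := hS.eq_of_le (y := S.filter fun b => ∃ n, σ^[n] c = b)
    ⟨⟨c, mem_filter.2 ⟨hc, 0, rfl⟩⟩, fun x hx => ?_⟩ (filter_subset _ _)
  · exact (mem_filter.1 (hO ▸ hb : b ∈ S.filter _)).2
  obtain ⟨hxS, n, rfl⟩ := mem_filter.1 hx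
  exact ⟨_, mem_filter.2 ⟨(hσ _ hxS).1, n + 1, Function.iterate_succ_apply' ..⟩, (hσ _ hxS).2⟩

/-- Otherwise the `σ`-orbit of `c` up to `b`, closed up by the edge from `b` to `c`, would be a
smaller set with successors. -/
theorem HasSuccIn.eq_of_rel_of_minimal [DecidableEq α]
    (hS : Minimal (fun S => S.Nonempty ∧ HasSuccIn R S) S)
    (hσ : ∀ x ∈ S, σ x ∈ S ∧ R x (σ x)) {b c : α} (hb : b ∈ S) (hc : c ∈ S) (hbc : R b c) :
    σ b = c := by
  by_contra hne
  have hmaps : Set.MapsTo σ S S := fun x hx => (hσ x hx).1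
  have hex := exists_iterate_eq_of_minimal hS hσ hb hc
  have hO := hS.eq_of_le (y := (range (Nat.find hex + 1)).image (σ^[·] c))
    ⟨⟨c, mem_image.2 ⟨0, by simp, rfl⟩⟩, fun x hx => ?_⟩
    (fun x hx => by obtain ⟨n, -, rfl⟩ := mem_image.1 hx; exact hmaps.iterate n hc)
  · obtain ⟨n, hn, hσb⟩ := mem_image.1 (hO ▸ (hσ b hb).1 : σ b ∈ _)
    cases n with
    | zero => exact hne hσb.symm
    | succ n =>
      rw [Function.iterate_succ_apply'] at hσb
      have hinj : Set.InjOn σ S := injOn_of_card_image_eq (by rw [image_eq_of_minimal hS hσ])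
      exact Nat.find_min hex (by have := mem_range.1 hn; omega)
        (hinj (hmaps.iterate n hc) hb hσb)
  obtain ⟨n, hn, rfl⟩ := mem_image.1 hx
  rcases (Nat.lt_succ_iff.1 (mem_range.1 hn)).lt_or_eq with hlt | heq
  · exact ⟨σ (σ^[n] c), mem_image.2 ⟨n + 1, by simpa using hlt, Function.iterate_succ_apply' ..⟩,
      (hσ _ (hmaps.iterate n hc)).2⟩
  · exact ⟨c, mem_image.2 ⟨0, by simp, rfl⟩, by rwa [heq, Nat.find_spec hex]⟩

end SuccessorCycles

theorem exists_finset_existsUnique_rel {α : Type*} [Finite α] [Nonempty α] (R : α → α → Prop)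
    (hR : ∀ a, ∃ b, R a b) : ∃ S : Finset α, S.Nonempty ∧ ∀ c ∈ S, ∃! b, b ∈ S ∧ R b c := by
  classical
  have := Fintype.ofFinite α
  obtain ⟨S, hS⟩ := exists_minimal_of_wellFoundedLT
    (fun S : Finset α => S.Nonempty ∧ HasSuccIn R S)
    ⟨univ, univ_nonempty, fun x _ => (hR x).imp fun y h => ⟨mem_univ y, h⟩⟩
  have : ∀ x, ∃ y, x ∈ S → y ∈ S ∧ R x y := fun x => by
    by_cases hx : x ∈ S
    · obtain ⟨y, hy, hxy⟩ := hS.prop.2 x hx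
      exact ⟨y, fun _ => ⟨hy, hxy⟩⟩
    · exact ⟨x, fun h => (hx h).elim⟩
  choose σ hσ using this
  have himage := HasSuccIn.image_eq_of_minimal hS hσ
  have hinj : Set.InjOn σ S := injOn_of_card_image_eq (by rw [himage])
  refine ⟨S, hS.prop.1, fun c hc => ?_⟩
  obtain ⟨b, hb, hbc⟩ := mem_image.1 (by rwa [himage] : c ∈ S.image σ)
  exact ⟨b, ⟨hb, hbc ▸ (hσ b hb).2⟩, fun b' ⟨hb', hR'⟩ =>
    hinj hb' hb ((HasSuccIn.eq_of_rel_of_minimal hS hσ hb' hc hR').trans hbc.symm)⟩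

theorem Finset.even_card_filter_odd_card {α ι : Type*} [DecidableEq α] (A : Finset α)
    (S : Finset ι) (C : ι → Finset α) (hC : ∀ i ∈ S, Even #(A ∩ C i)) :
    Even #{x ∈ A | Odd #{i ∈ S | x ∈ C i}} := by
  rw [← even_sum_iff_even_card_odd]
  have := sum_card_bipartiteAbove_eq_sum_card_bipartiteBelow (s := A) (t := S)
    (r := fun x i => x ∈ C i)
  simp only [bipartiteAbove, bipartiteBelow] at this
  rw [this]
  exact even_sum _ fun i hi => by rw [filter_mem_eq_inter]; exact hC i hi

section Graphs

variable {V : Type*}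

theorem even_card_filter_mem_filter_odd_card {ι : Type*} [DecidableEq V] (A : Finset (Sym2 V))
    (S : Finset ι) (C : ι → Finset (Sym2 V)) (hCA : ∀ i ∈ S, C i ⊆ A)
    (hC : ∀ i ∈ S, ∀ v, Even #{g ∈ C i | v ∈ g}) (v : V) :
    Even #{g ∈ {g ∈ A | Odd #{i ∈ S | g ∈ C i}} | v ∈ g} := by
  rw [filter_comm]
  refine (A.filter (v ∈ ·)).even_card_filter_odd_card S C fun i hi => ?_
  convert hC i hi v using 2
  ext g
  simp only [mem_inter, mem_filter]
  exact ⟨fun h => ⟨h.2, h.1.2⟩, fun h => ⟨⟨hCA i hi h.1, h.2⟩, h.1⟩⟩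

theorem edgeFinset_fromEdgeSet_eq {R : Finset (Sym2 V)} (hR : ∀ g ∈ R, ¬ g.IsDiag)
    [Fintype (fromEdgeSet (R : Set (Sym2 V))).edgeSet] :
    (fromEdgeSet (R : Set (Sym2 V))).edgeFinset = R := by
  ext g; simpa using fun hg => hR g hg

theorem isAcyclic_fromEdgeSet_of_injOn {k : ℕ} {G : SimpleGraph V} {φ : Sym2 V → Fin k}
    (hG : ¬ HasRainbowCycle G φ) {R : Set (Sym2 V)} (hRG : R ⊆ G.edgeSet)
    (hR : Set.InjOn φ R) : (fromEdgeSet R).IsAcyclic := by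
  intro v c hc
  have hcR : {e | e ∈ c.edges} ⊆ R := fun e he =>
    (edgeSet_fromEdgeSet R ▸ c.edges_subset_edgeSet he).1
  exact hG ⟨v, c.transfer G fun e he => hRG (hcR he), hc.transfer _, by
    rw [Walk.edges_transfer]; exact hR.mono hcR⟩

theorem SimpleGraph.IsAcyclic.isTree_of_card_edgeFinset [Fintype V] [Nonempty V]
    {H : SimpleGraph V} [Fintype H.edgeSet] (hH : H.IsAcyclic)
    (hcard : #H.edgeFinset + 1 = Fintype.card V) : H.IsTree := by
  classical
  obtain ⟨F, hHF, -, hF⟩ := connected_top.exists_isTree_le_of_le_of_isAcyclic le_top hH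
  have : H.edgeFinset = F.edgeFinset := eq_of_subset_of_card_le (edgeFinset_mono hHF)
    (by have := hF.card_edgeFinset; omega)
  rwa [edgeFinset_inj.1 this]

theorem SimpleGraph.IsAcyclic.exists_degree_eq_one [Fintype V] {G : SimpleGraph V}
    [DecidableRel G.Adj] (hG : G.IsAcyclic) {x y : V} (hxy : G.Adj x y) :
    ∃ v, G.degree v = 1 := by
  have : Nonempty V := ⟨x⟩
  obtain ⟨u, v, p, hp, hmax⟩ := Walk.exists_isPath_forall_isPath_length_le_length G
  have hnil : ¬ p.Nil := fun h => by
    have := hmax x y (.cons hxy .nil) (by simp [hxy.ne])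
    simp [Walk.length_eq_zero_iff.2 h] at this
  refine ⟨u, degree_eq_one_iff_existsUnique_adj.2 ⟨_, p.adj_snd hnil, fun w hadj => ?_⟩⟩
  apply hG.eq_snd_of_adj_start hp hadj
  have : ¬(p.cons hadj.symm).IsPath := by grind [Walk.length_cons]
  grind [hp.cons]

theorem exists_card_filter_mem_eq_one_of_isAcyclic [Fintype V] [DecidableEq V]
    {R : Finset (Sym2 V)} (hR : ∀ g ∈ R, ¬ g.IsDiag)
    (hacyc : (fromEdgeSet (R : Set (Sym2 V))).IsAcyclic) (hne : R.Nonempty) :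
    ∃ v, #{g ∈ R | v ∈ g} = 1 := by
  classical
  obtain ⟨g, hg⟩ := hne
  induction g using Sym2.ind with
  | _ x y =>
  obtain ⟨v, hv⟩ := hacyc.exists_degree_eq_one (x := x) (y := y)
    (by simpa using ⟨hg, fun h => hR _ hg (by simp [h])⟩)
  refine ⟨v, ?_⟩
  rw [← hv, ← card_incidenceFinset_eq_degree, incidenceFinset_eq_filter,
    edgeFinset_fromEdgeSet_eq hR]

theorem SimpleGraph.Walk.IsCycle.even_card_filter_mem [DecidableEq V] {G : SimpleGraph V}
    {u : V} {c : G.Walk u u} (hc : c.IsCycle) (v : V) :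
    Even #{g ∈ c.edges.toFinset | v ∈ g} := by
  rw [List.filter_toFinset, List.toFinset_card_of_nodup (hc.edges_nodup.filter _),
    ← List.countP_eq_length_filter]
  exact (hc.isTrail.even_countP_edges_iff v).2 fun h => absurd rfl h

theorem exists_isCycle_of_reachable_fromEdgeSet [DecidableEq V] {G : SimpleGraph V}
    {T : Finset (Sym2 V)} (hTG : (T : Set (Sym2 V)) ⊆ G.edgeSet) {x y : V} (hxy : G.Adj x y)
    (hT : (fromEdgeSet (T : Set (Sym2 V))).Reachable x y) (hfT : s(x, y) ∉ T) :
    ∃ (u : V) (c : G.Walk u u), c.IsCycle ∧ s(x, y) ∈ c.edges ∧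
      ∀ g ∈ c.edges, g ∈ insert s(x, y) T := by
  obtain ⟨p, hp⟩ := hT.exists_isPath
  have hpT : ∀ g ∈ p.edges, g ∈ T := fun g hg =>
    (edgeSet_fromEdgeSet (T : Set (Sym2 V)) ▸ p.edges_subset_edgeSet hg).1
  let q := p.transfer G fun g hg => hTG (hpT g hg)
  refine ⟨y, .cons hxy.symm q, (Walk.cons_isCycle_iff q hxy.symm).2 ⟨hp.transfer _, ?_⟩, ?_, ?_⟩
  · rw [Walk.edges_transfer, Sym2.eq_swap]
    exact fun h => hfT (hpT _ h)
  · simp [Sym2.eq_swap]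
  · simp only [q, Walk.edges_cons, List.mem_cons, Walk.edges_transfer, mem_insert]
    rintro g (rfl | hg)
    · exact Or.inl Sym2.eq_swap
    · exact Or.inr (hpT g hg)

structure TwoEdgesPerColor {k : ℕ} (G : SimpleGraph V) (φ : Sym2 V → Fin k) where
  fst : Fin k → Sym2 V
  snd : Fin k → Sym2 V
  fst_mem : ∀ c, fst c ∈ G.edgeSet
  snd_mem : ∀ c, snd c ∈ G.edgeSet
  color_fst : ∀ c, φ (fst c) = c
  color_snd : ∀ c, φ (snd c) = c
  fst_ne_snd : ∀ c, fst c ≠ snd c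

namespace TwoEdgesPerColor

variable {k : ℕ} {G : SimpleGraph V} {φ : Sym2 V → Fin k} (P : TwoEdgesPerColor G φ)

theorem fst_injective : Function.Injective P.fst := fun c d h => by
  rw [← P.color_fst c, h, P.color_fst]

theorem snd_injective : Function.Injective P.snd := fun c d h => by
  rw [← P.color_snd c, h, P.color_snd]

variable [DecidableEq V]

def edges : Finset (Sym2 V) := univ.image P.fst ∪ univ.image P.snd

theorem coe_edges_subset : ↑P.edges ⊆ G.edgeSet := by
  simp [edges, Set.range_subset_iff, P.fst_mem, P.snd_mem]

theorem coe_image_fst_subset : ↑(univ.image P.fst) ⊆ G.edgeSet :=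
  (coe_subset.2 subset_union_left).trans P.coe_edges_subset

theorem eq_fst_or_eq_snd_of_mem_edges {g : Sym2 V} (hg : g ∈ P.edges) :
    g = P.fst (φ g) ∨ g = P.snd (φ g) := by
  simp only [edges, mem_union, mem_image, mem_univ, true_and] at hg
  rcases hg with ⟨c, rfl⟩ | ⟨c, rfl⟩ <;> simp [P.color_fst, P.color_snd]

theorem injOn_of_subset_edges {Δ : Finset (Sym2 V)} (hΔ : Δ ⊆ P.edges)
    (h : ∀ c, P.snd c ∈ Δ → P.fst c ∉ Δ) : Set.InjOn φ Δ := by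
  intro g hg g' hg' hgg'
  by_contra hne
  have hg'' := P.eq_fst_or_eq_snd_of_mem_edges (hΔ hg')
  rw [← hgg'] at hg''
  rcases P.eq_fst_or_eq_snd_of_mem_edges (hΔ hg) with h₁ | h₁ <;> rcases hg'' with h₂ | h₂
  · exact hne (h₁.trans h₂.symm)
  · exact h _ (h₂ ▸ hg') (h₁ ▸ hg)
  · exact h _ (h₁ ▸ hg) (h₂ ▸ hg')
  · exact hne (h₁.trans h₂.symm)

theorem snd_not_mem_image_fst (c : Fin k) : P.snd c ∉ univ.image P.fst := by
  simp only [mem_image, mem_univ, true_and, not_exists]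
  intro d h
  obtain rfl : d = c := by rw [← P.color_fst d, h, P.color_snd]
  exact P.fst_ne_snd d h

theorem isTree_image_fst [Fintype V] (hG : ¬ HasRainbowCycle G φ)
    (hk : k + 1 = Fintype.card V) :
    (fromEdgeSet (↑(univ.image P.fst) : Set (Sym2 V))).IsTree := by
  classical
  have : Nonempty V := Fintype.card_pos_iff.1 (by omega)
  refine (isAcyclic_fromEdgeSet_of_injOn hG P.coe_image_fst_subset
    (P.injOn_of_subset_edges subset_union_left fun c h => (P.snd_not_mem_image_fst c h).elim))
    |>.isTree_of_card_edgeFinset ?_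
  rw [edgeFinset_fromEdgeSet_eq fun g hg => G.not_isDiag_of_mem_edgeSet
    (P.coe_image_fst_subset hg), card_image_of_injective _ P.fst_injective, card_univ,
    Fintype.card_fin, hk]

theorem exists_fundamental_cycle [Fintype V] (hG : ¬ HasRainbowCycle G φ)
    (hk : k + 1 = Fintype.card V) (b : Fin k) :
    ∃ C : Finset (Sym2 V), C ⊆ insert (P.snd b) (univ.image P.fst) ∧ P.snd b ∈ C ∧
      P.fst b ∈ C ∧ (∃ c ≠ b, P.fst c ∈ C) ∧ ∀ v, Even #{g ∈ C | v ∈ g} := by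
  obtain ⟨u, c, hc, hsnd, hcT⟩ : ∃ (u : V) (c : G.Walk u u), c.IsCycle ∧ P.snd b ∈ c.edges ∧
      ∀ g ∈ c.edges, g ∈ insert (P.snd b) (univ.image P.fst) := by
    have hsnd := P.snd_mem b
    have hsndT := P.snd_not_mem_image_fst b
    generalize P.snd b = g at hsnd hsndT ⊢
    induction g using Sym2.ind with
    | _ x y =>
      exact exists_isCycle_of_reachable_fromEdgeSet P.coe_image_fst_subset hsnd
        ((P.isTree_image_fst hG hk).connected.preconnected x y) hsndT
  have hcT' : ∀ g ∈ c.edges, g = P.snd b ∨ ∃ d, g = P.fst d := fun g hg => by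
    simpa [eq_comm] using hcT g hg
  have hfst : P.fst b ∈ c.edges := by
    by_contra hnot
    refine hG ⟨u, c, hc, fun g₁ hg₁ g₂ hg₂ h => ?_⟩
    have hne : ∀ g ∈ c.edges, ∀ d, g = P.fst d → d ≠ b := by
      rintro g hg d rfl rfl; exact hnot hg
    rcases hcT' g₁ hg₁ with rfl | ⟨d₁, rfl⟩ <;> rcases hcT' g₂ hg₂ with rfl | ⟨d₂, rfl⟩
    · rfl
    · exact absurd (by simpa [P.color_fst, P.color_snd] using h.symm) (hne _ hg₂ d₂ rfl)
    · exact absurd (by simpa [P.color_fst, P.color_snd] using h) (hne _ hg₁ d₁ rfl)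
    · rw [P.color_fst, P.color_fst] at h; rw [h]
  have hcard : 2 < #(c.edges.toFinset.erase (P.snd b)) + 1 := by
    rw [card_erase_add_one (List.mem_toFinset.2 hsnd),
      List.toFinset_card_of_nodup hc.edges_nodup]
    exact (Walk.length_edges c).symm ▸ hc.three_le_length
  obtain ⟨g, hg, hgb⟩ :=
    exists_mem_ne (s := c.edges.toFinset.erase (P.snd b)) (by omega) (P.fst b)
  obtain ⟨hgsnd, hgc⟩ := mem_erase.1 hg
  obtain ⟨d, rfl⟩ := (hcT' g (List.mem_toFinset.1 hgc)).resolve_left hgsnd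
  exact ⟨c.edges.toFinset, fun g hg => hcT g (List.mem_toFinset.1 hg),
    List.mem_toFinset.2 hsnd, List.mem_toFinset.2 hfst, ⟨d, fun h => hgb (h ▸ rfl), hgc⟩,
    hc.even_card_filter_mem⟩

end TwoEdgesPerColor

theorem TwoEdgesPerColor.hasRainbowCycle [Fintype V] [DecidableEq V] {k : ℕ} [NeZero k]
    {G : SimpleGraph V} {φ : Sym2 V → Fin k} (P : TwoEdgesPerColor G φ)
    (hk : k + 1 = Fintype.card V) : HasRainbowCycle G φ := by
  by_contra hG
  choose C hCT hsndC hfstC hR hCeven using P.exists_fundamental_cycle hG hk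
  obtain ⟨S, ⟨c₀, hc₀⟩, hS⟩ :=
    exists_finset_existsUnique_rel (fun b c => c ≠ b ∧ P.fst c ∈ C b) hR
  have hCE : ∀ b, C b ⊆ P.edges := fun b =>
    (hCT b).trans (insert_subset (by simp [TwoEdgesPerColor.edges]) subset_union_left)
  have hsnd_mem : ∀ b c, P.snd c ∈ C b ↔ b = c := fun b c =>
    ⟨fun h => P.snd_injective ((mem_insert.1 (hCT b h)).resolve_right
      (P.snd_not_mem_image_fst c)).symm, fun h => h ▸ hsndC b⟩
  have hfst_card : ∀ c ∈ S, #{b ∈ S | P.fst c ∈ C b} = 2 := by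
    intro c hc
    obtain ⟨b, ⟨hb, hcb, hfst⟩, huniq⟩ := hS c hc
    rw [← card_pair hcb]
    congr 1
    ext b'
    simp only [mem_filter, mem_insert, mem_singleton]
    refine ⟨fun ⟨hb', h⟩ => (eq_or_ne b' c).imp id fun h' => huniq b' ⟨hb', h'.symm, h⟩, ?_⟩
    rintro (rfl | rfl)
    exacts [⟨hc, hfstC _⟩, ⟨hb, hfst⟩]
  -- the mod-2 sum of the fundamental cycles `C b`, `b ∈ S`
  let Δ := {g ∈ P.edges | Odd #{b ∈ S | g ∈ C b}}
  have hsndΔ : ∀ c, P.snd c ∈ Δ ↔ c ∈ S := fun c => by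
    have : {b ∈ S | P.snd c ∈ C b} = if c ∈ S then {c} else ∅ := by
      simp_rw [hsnd_mem]; exact filter_eq' S c
    by_cases hc : c ∈ S <;> simp [Δ, TwoEdgesPerColor.edges, this, hc]
  have hΔinj : Set.InjOn φ Δ := P.injOn_of_subset_edges (filter_subset _ _) fun c hc => by
    simp [Δ, hfst_card c ((hsndΔ c).1 hc)]
  have hΔG : ↑Δ ⊆ G.edgeSet := (coe_subset.2 (filter_subset _ _)).trans P.coe_edges_subset
  obtain ⟨v, hv⟩ := exists_card_filter_mem_eq_one_of_isAcyclic
    (fun g hg => G.not_isDiag_of_mem_edgeSet (hΔG hg))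
    (isAcyclic_fromEdgeSet_of_injOn hG hΔG hΔinj) ⟨P.snd c₀, (hsndΔ c₀).2 hc₀⟩
  exact Nat.not_even_one (hv ▸ even_card_filter_mem_filter_odd_card _ S C
    (fun b _ => hCE b) (fun b _ => hCeven b) v)

theorem IsJLColoring.exists_card_colorClass_eq_one [Fintype V] [DecidableEq V]
    {G : SimpleGraph V} [DecidableRel G.Adj] {k : ℕ} [NeZero k] {φ : Sym2 V → Fin k}
    (hφ : IsJLColoring G φ) (hk : k + 1 = Fintype.card V) :
    ∃ c, #{e ∈ G.edgeFinset | φ e = c} = 1 := by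
  by_contra! h
  have : ∀ c, ∃ e f, (e ∈ G.edgeSet ∧ φ e = c) ∧ (f ∈ G.edgeSet ∧ φ f = c) ∧ e ≠ f :=
    fun c => by
      obtain ⟨e, he, hec⟩ := hφ.1 c
      have hpos : 0 < #{e ∈ G.edgeFinset | φ e = c} := card_pos.2 ⟨e, by simp [he, hec]⟩
      obtain ⟨e, he, f, hf, hef⟩ := (one_lt_card (s := {e ∈ G.edgeFinset | φ e = c})).1
        (by have := h c; omega)
      simp only [mem_filter, mem_edgeFinset] at he hf
      exact ⟨e, f, he, hf, hef⟩
  choose e f he hf hef using this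
  exact hφ.2 (TwoEdgesPerColor.hasRainbowCycle ⟨e, f, fun c => (he c).1, fun c => (hf c).1,
    fun c => (he c).2, fun c => (hf c).2, hef⟩ hk)

theorem numRST_le_prod_card_colorClass [Fintype V] [DecidableEq V] (G : SimpleGraph V)
    [DecidableRel G.Adj] {k : ℕ} (φ : Sym2 V → Fin k) (hk : k + 1 = Fintype.card V) :
    numRST G φ ≤ ∏ c, #{e ∈ G.edgeFinset | φ e = c} := by
  let F : ((c : Fin k) → {e // e ∈ G.edgeFinset.filter (φ · = c)}) → Finset (Sym2 V) :=
    fun s => univ.image fun c => (s c : Sym2 V)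
  have hsub : {T | IsSpanningTreeEdges G T ∧ IsRainbow φ T} ⊆ Set.range F := by
    rintro T ⟨⟨hTG, hTconn, hTacyc⟩, hTrb⟩
    have hcard := IsTree.card_edgeFinset ⟨hTconn, hTacyc⟩
    rw [edgeFinset_fromEdgeSet_eq fun g hg => G.not_isDiag_of_mem_edgeSet (hTG hg)] at hcard
    have himg : T.image φ = univ := eq_univ_of_card _ <| by
      rw [card_image_of_injOn hTrb, Fintype.card_fin]; omega
    have : ∀ c, ∃ g ∈ T, φ g = c := fun c => mem_image.1 (himg ▸ mem_univ c)
    choose s hsT hsc using this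
    refine ⟨fun c => ⟨s c, mem_filter.2 ⟨mem_edgeFinset.2 (hTG (hsT c)), hsc c⟩⟩, ?_⟩
    ext g
    simp only [F, mem_image, mem_univ, true_and]
    exact ⟨by rintro ⟨c, rfl⟩; exact hsT c, fun hg => ⟨φ g, hTrb (hsT _) hg (hsc _)⟩⟩
  calc numRST G φ = Nat.card {T | IsSpanningTreeEdges G T ∧ IsRainbow φ T} := rfl
    _ ≤ Nat.card (Set.range F) := Nat.card_mono (Set.toFinite _) hsub
    _ ≤ _ := Finite.card_range_le F
    _ = _ := by
      rw [Nat.card_eq_fintype_card, Fintype.card_pi]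
      exact prod_congr rfl fun c _ => Fintype.card_coe _

end Graphs

section BalancedProducts

variable {ι : Type*} [Fintype ι] [DecidableEq ι]

@[to_additive]
theorem Finset.prod_update_update {M : Type*} [CommMonoid M] (f : ι → M) {i j : ι}
    (hij : i ≠ j) (x y : M) :
    ∏ l, Function.update (Function.update f i x) j y l =
      x * y * ∏ l ∈ (univ.erase i).erase j, f l := by
  rw [← mul_prod_erase univ _ (mem_univ i),
    ← mul_prod_erase _ _ (mem_erase.2 ⟨hij.symm, mem_univ j⟩)]
  simp only [Function.update_self, Function.update_of_ne hij, ← mul_assoc]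
  congr 1
  refine prod_congr rfl fun l hl => ?_
  obtain ⟨hlj, hli, -⟩ := mem_erase.1 hl |>.imp_right mem_erase.1
  simp [Function.update_of_ne hlj, Function.update_of_ne hli]

@[to_additive]
theorem Finset.prod_eq_mul_mul_prod_erase_erase {M : Type*} [CommMonoid M] (f : ι → M)
    {i j : ι} (hij : i ≠ j) : ∏ l, f l = f i * f j * ∏ l ∈ (univ.erase i).erase j, f l := by
  simpa using prod_update_update f hij (f i) (f j)

theorem Finset.sum_update_update_sub_one_add_one (b : ι → ℕ) {i j : ι} (hij : i ≠ j)
    (hi : 0 < b i) :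
    ∑ l, Function.update (Function.update b i (b i - 1)) j (b j + 1) l = ∑ l, b l := by
  rw [sum_update_update b hij, sum_eq_add_add_sum_erase_erase b hij]
  omega

theorem Finset.prod_le_prod_of_sum_eq_of_le_add_one {a : ι → ℕ} (ha : ∀ i j, a i ≤ a j + 1)
    (b : ι → ℕ) (hb : ∑ i, b i = ∑ i, a i) :
    ∏ i, b i ≤ ∏ i, a i := by
  -- Induct on the deficit of `b` below `a`: moving one unit from some `i` with `a i < b i` to
  -- some `j` with `b j < a j` lowers the deficit and, as `b j + 1 ≤ b i`, does not lower `∏ b`.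
  induction hD : ∑ i, (a i - b i) using Nat.strong_induction_on generalizing b with
  | _ D ih =>
  by_cases hab : ∀ i, a i ≤ b i
  · exact (prod_congr rfl ((sum_eq_sum_iff_of_le fun i _ => hab i).1 hb.symm)).ge
  push Not at hab
  obtain ⟨j, hj⟩ := hab
  obtain ⟨i, hi⟩ : ∃ i, a i < b i := by
    by_contra! h
    exact (sum_lt_sum (fun i _ => h i) ⟨j, mem_univ j, hj⟩).ne hb
  have hij : i ≠ j := by rintro rfl; omega
  have hji : b j + 1 ≤ b i := by have := ha j i; omega
  let b' := Function.update (Function.update b i (b i - 1)) j (b j + 1)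
  calc ∏ l, b l = b i * b j * ∏ l ∈ (univ.erase i).erase j, b l :=
        prod_eq_mul_mul_prod_erase_erase b hij
    _ ≤ (b i - 1) * (b j + 1) * ∏ l ∈ (univ.erase i).erase j, b l := by
        refine Nat.mul_le_mul_right _ ?_
        obtain ⟨m, hm⟩ : ∃ m, b i = m + 1 := ⟨b i - 1, by omega⟩
        rw [hm, Nat.add_sub_cancel]
        nlinarith
    _ = ∏ l, b' l := (prod_update_update b hij _ _).symm
    _ ≤ ∏ l, a l := by
        refine ih _ ?_ b' ((sum_update_update_sub_one_add_one b hij (by omega)).trans hb) rfl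
        rw [← hD]
        refine sum_lt_sum (fun l _ => ?_) ⟨j, mem_univ j, by simp [b']; omega⟩
        simp only [b', Function.update_apply]
        split_ifs with h₁ h₂
        · subst h₁; omega
        · subst h₂; omega
        · exact le_rfl

theorem Finset.prod_lt_prod_of_sum_eq_of_le_add_one {a : ι → ℕ} (ha₂ : ∀ i, 2 ≤ a i)
    (ha : ∀ i j, a i ≤ a j + 1) (b : ι → ℕ)
    (hb : ∑ i, b i = ∑ i, a i) {i₀ : ι} (hi₀ : b i₀ = 1) : ∏ i, b i < ∏ i, a i := by
  by_cases hb₀ : ∃ l, b l = 0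
  · obtain ⟨l, hl⟩ := hb₀
    rw [prod_eq_zero (mem_univ l) hl]
    exact prod_pos fun i _ => by linarith [ha₂ i]
  push Not at hb₀
  obtain ⟨i, hi⟩ : ∃ i, a i < b i := by
    by_contra! h
    exact (sum_lt_sum (fun i _ => h i) ⟨i₀, mem_univ _, by linarith [ha₂ i₀]⟩).ne hb
  have hii₀ : i ≠ i₀ := by rintro rfl; linarith [ha₂ i]
  calc ∏ l, b l = b i * b i₀ * ∏ l ∈ (univ.erase i).erase i₀, b l :=
        prod_eq_mul_mul_prod_erase_erase b hii₀
    _ < (b i - 1) * (b i₀ + 1) * ∏ l ∈ (univ.erase i).erase i₀, b l := by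
        refine Nat.mul_lt_mul_of_pos_right ?_ (prod_pos fun l _ => Nat.pos_of_ne_zero (hb₀ l))
        have := ha₂ i
        rw [hi₀]; omega
    _ = ∏ l, Function.update (Function.update b i (b i - 1)) i₀ (b i₀ + 1) l :=
        (prod_update_update b hii₀ _ _).symm
    _ ≤ ∏ l, a l := prod_le_prod_of_sum_eq_of_le_add_one ha _
        ((sum_update_update_sub_one_add_one b hii₀ (by omega)).trans hb)

end BalancedProducts

theorem stmt_16_general {V : Type*} [Fintype V] (G : SimpleGraph V)
    [DecidableRel G.Adj] (hG : G.Connected)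
    (φ : Sym2 V → Fin (Fintype.card V - 1)) (hφ : IsJLColoring G φ) :
    (∃ c : Fin (Fintype.card V - 1),
        (G.edgeFinset.filter (fun e => φ e = c)).card = 1) ∧
      ∀ a : Fin (Fintype.card V - 1) → ℕ,
        (∀ i, 2 ≤ a i) → (∀ i j, a i ≤ a j + 1) → (∑ i, a i = G.edgeFinset.card) →
          numRST G φ < ∏ i, a i := by
  classical
  obtain ⟨v⟩ := hG.nonempty
  -- `φ` is also defined on loops, so `Fin (card V - 1)` is inhabited
  have hk_pos : 0 < Fintype.card V - 1 := (φ s(v, v)).pos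
  have hk : Fintype.card V - 1 + 1 = Fintype.card V := by omega
  have : NeZero (Fintype.card V - 1) := ⟨hk_pos.ne'⟩
  obtain ⟨c₀, hc₀⟩ := hφ.exists_card_colorClass_eq_one hk
  refine ⟨⟨c₀, hc₀⟩, fun a ha₂ ha hsum => ?_⟩
  calc numRST G φ ≤ ∏ c, #{e ∈ G.edgeFinset | φ e = c} := numRST_le_prod_card_colorClass G φ hk
    _ < ∏ i, a i := prod_lt_prod_of_sum_eq_of_le_add_one ha₂ ha _
        ((card_eq_sum_card_fiberwise fun e _ => mem_univ (φ e)).symm.trans hsum.symm) hc₀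

/-- If `G` is a connected graph on `n` vertices with a JL-coloring `φ` and
`|E(G)| ≥ 2(n-1)`, then some color class has size exactly 1; consequently, for any
near-equal positive integers `a₁, …, a_{n-1}` (pairwise differing by at most 1, each `≥ 2`)
summing to `|E(G)|`, the bound `|R(G,φ)| ≤ ∏ aᵢ` is strict. -/
theorem stmt_16 {V : Type*} [Fintype V] [DecidableEq V] (G : SimpleGraph V)
    [DecidableRel G.Adj] (hG : G.Connected)
    (φ : Sym2 V → Fin (Fintype.card V - 1)) (hφ : IsJLColoring G φ)
    (hE : 2 * (Fintype.card V - 1) ≤ G.edgeFinset.card) :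
    (∃ c : Fin (Fintype.card V - 1),
        (G.edgeFinset.filter (fun e => φ e = c)).card = 1) ∧
      ∀ a : Fin (Fintype.card V - 1) → ℕ,
        (∀ i, 2 ≤ a i) → (∀ i j, a i ≤ a j + 1) → (∑ i, a i = G.edgeFinset.card) →
          numRST G φ < ∏ i, a i :=
  stmt_16_general G hG φ hφ
end
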